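/- arXiv:2003.01571 — 8 statements merged into one kernel-verified Lean document; each statement's English description precedes it below -/
import Mathlib

section
/- Let n ≥ 1 and let 0 ≤ i ≤ j ≤ n with i + j ≤ n. If f : Σ_2^n → ℝ is a nonzero function in U_{[i,j]}(n,2), then the cardinality of the support of f is at least 2^{n-j}. -/
/-- `f` belongs to the eigenspace `U_k(n,q)` of the Hamming graph `H(n,q)`,
i.e. `λ_k(n,q) · f(x) = Σ_{y ∈ N(x)} f(y)` for every vertex `x`, where
`λ_k(n,q) = n(q-1) - q·k` and `N(x)` is the set of vertices at Hamming distance 1 from `x`. -/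
def inU (n q k : ℕ) (f : (Fin n → Fin q) → ℝ) : Prop :=
  ∀ x : Fin n → Fin q,
    ((n : ℝ) * ((q : ℝ) - 1) - (q : ℝ) * (k : ℝ)) * f x =
      ∑ y ∈ Finset.univ.filter (fun y : Fin n → Fin q => hammingDist x y = 1), f y

/-- `f` belongs to the direct sum `U_{[i,j]}(n,q) = U_i(n,q) ⊕ … ⊕ U_j(n,q)`,
i.e. `f = Σ_{k=i}^{j} g_k` with `g_k ∈ U_k(n,q)`. -/
def inUIJ (n q i j : ℕ) (f : (Fin n → Fin q) → ℝ) : Prop :=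
  ∃ g : ℕ → (Fin n → Fin q) → ℝ,
    (∀ k ∈ Finset.Icc i j, inU n q k (g k)) ∧ f = ∑ k ∈ Finset.Icc i j, g k

/-- The cardinality of the support of `f`. -/
noncomputable def suppCard (n q : ℕ) (f : (Fin n → Fin q) → ℝ) : ℕ :=
  (Finset.univ.filter (fun x : Fin n → Fin q => f x ≠ 0)).card


open Finset

namespace HS

variable {n : ℕ}

def indV (T : Finset (Fin n)) : Fin n → Fin 2 := fun m => if m ∈ T then 1 else 0

def toSet (x : Fin n → Fin 2) : Finset (Fin n) := univ.filter (fun m => x m = 1)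

noncomputable def coeff (f : (Fin n → Fin 2) → ℝ) (S : Finset (Fin n)) : ℝ :=
  ∑ T ∈ S.powerset, (-1 : ℝ) ^ ((S \ T).card) * f (indV T)

lemma indV_toSet (x : Fin n → Fin 2) : indV (toSet x) = x := by
  funext m
  simp only [indV, toSet, mem_filter, mem_univ, true_and]
  by_cases h : x m = 1
  · simp [h]
  · have : x m = 0 := by omega
    simp [h, this]

lemma pow_sum_real (A : Finset (Fin n)) :
    ∑ U ∈ A.powerset, (-1 : ℝ) ^ U.card = if A = ∅ then 1 else 0 := by
  have h := @Finset.sum_powerset_neg_one_pow_card (Fin n) _ A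
  have h2 : ((∑ m ∈ A.powerset, (-1 : ℤ) ^ m.card : ℤ) : ℝ)
      = ∑ U ∈ A.powerset, (-1 : ℝ) ^ U.card := by push_cast; rfl
  rw [← h2, h]
  split <;> norm_num

lemma kernel1 {A B : Finset (Fin n)} (h : A ⊆ B) :
    ∑ T ∈ B.powerset.filter (fun T => A ⊆ T), (-1 : ℝ) ^ ((T \ A).card)
      = if A = B then 1 else 0 := by
  have e : ∑ T ∈ B.powerset.filter (fun T => A ⊆ T), (-1 : ℝ) ^ ((T \ A).card)
      = ∑ U ∈ (B \ A).powerset, (-1 : ℝ) ^ U.card := by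
    refine sum_nbij' (fun T => T \ A) (fun U => A ∪ U) ?_ ?_ ?_ ?_ ?_
    · intro T hT
      simp only [mem_filter, mem_powerset] at hT ⊢
      exact sdiff_subset_sdiff hT.1 le_rfl
    · intro U hU
      simp only [mem_powerset] at hU
      simp only [mem_filter, mem_powerset]
      exact ⟨union_subset h (hU.trans sdiff_subset), subset_union_left⟩
    · intro T hT
      simp only [mem_filter, mem_powerset] at hT
      exact union_sdiff_of_subset hT.2
    · intro U hU
      simp only [mem_powerset] at hU
      have hd : Disjoint A U := disjoint_left.2 fun a haA haU => (mem_sdiff.1 (hU haU)).2 haA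
      exact union_sdiff_cancel_left hd
    · intro T hT; rfl
  rw [e, pow_sum_real]
  by_cases hAB : A = B
  · simp [hAB]
  · have hne : B \ A ≠ ∅ := fun he =>
      hAB (subset_antisymm h (by rwa [sdiff_eq_empty_iff_subset] at he))
    simp [hAB, hne]

lemma kernel2 {A B : Finset (Fin n)} (h : A ⊆ B) :
    ∑ T ∈ B.powerset.filter (fun T => A ⊆ T), (-1 : ℝ) ^ ((B \ T).card)
      = if A = B then 1 else 0 := by
  have e : ∑ T ∈ B.powerset.filter (fun T => A ⊆ T), (-1 : ℝ) ^ ((B \ T).card)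
      = ∑ U ∈ (B \ A).powerset, (-1 : ℝ) ^ U.card := by
    refine sum_nbij' (fun T => B \ T) (fun U => B \ U) ?_ ?_ ?_ ?_ ?_
    · intro T hT
      simp only [mem_filter, mem_powerset] at hT ⊢
      exact sdiff_subset_sdiff le_rfl hT.2
    · intro U hU
      simp only [mem_powerset] at hU
      simp only [mem_filter, mem_powerset]
      refine ⟨sdiff_subset, fun a ha => mem_sdiff.2 ⟨h ha, fun hU' => (mem_sdiff.1 (hU hU')).2 ha⟩⟩
    · intro T hT
      simp only [mem_filter, mem_powerset] at hT
      exact Finset.sdiff_sdiff_eq_self hT.1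
    · intro U hU
      simp only [mem_powerset] at hU
      exact Finset.sdiff_sdiff_eq_self (hU.trans sdiff_subset)
    · intro T hT; rfl
  rw [e, pow_sum_real]
  by_cases hAB : A = B
  · simp [hAB]
  · have hne : B \ A ≠ ∅ := fun he =>
      hAB (subset_antisymm h (by rwa [sdiff_eq_empty_iff_subset] at he))
    simp [hAB, hne]

lemma powerset_eq_filter {s t : Finset (Fin n)} (h : s ⊆ t) :
    s.powerset = t.powerset.filter (fun u => u ⊆ s) := by
  ext u
  simp only [mem_powerset, mem_filter]
  exact ⟨fun hu => ⟨hu.trans h, hu⟩, fun hu => hu.2⟩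

lemma inv_sum (f : (Fin n → Fin 2) → ℝ) (x : Fin n → Fin 2) :
    f x = ∑ S ∈ (toSet x).powerset, coeff f S := by
  set X := toSet x with hX
  have e1 : ∑ S ∈ X.powerset, coeff f S = ∑ S ∈ X.powerset, ∑ T ∈ X.powerset,
      (if T ⊆ S then (-1 : ℝ) ^ ((S \ T).card) * f (indV T) else 0) := by
    refine sum_congr rfl fun S hS => ?_
    unfold coeff
    rw [powerset_eq_filter (mem_powerset.1 hS), sum_filter]
  have h1 : ∀ T ∈ X.powerset,
      (∑ S ∈ X.powerset, if T ⊆ S then (-1 : ℝ) ^ ((S \ T).card) * f (indV T) else 0)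
        = f (indV T) * (if T = X then 1 else 0) := by
    intro T hT
    rw [← sum_filter, ← kernel1 (mem_powerset.1 hT), mul_sum]
    exact sum_congr rfl fun S hS => mul_comm _ _
  rw [e1, Finset.sum_comm, sum_congr rfl h1]
  rw [Finset.sum_eq_single_of_mem X (mem_powerset_self X)]
  · rw [if_pos rfl, mul_one, hX, indV_toSet]
  · intro b _ hb
    rw [if_neg hb, mul_zero]
noncomputable def chi (S : Finset (Fin n)) (x : Fin n → Fin 2) : ℝ :=
  ∏ m ∈ S, (-1 : ℝ) ^ ((x m : ℕ))

lemma fin2_ne_add_one (a : Fin 2) : a ≠ a + 1 := by fin_cases a <;> decide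

lemma fin2_eq_add_one {a b : Fin 2} (h : a ≠ b) : b = a + 1 := by
  fin_cases a <;> fin_cases b <;> simp_all <;> decide

lemma fin2_add_one_add_one (a : Fin 2) : a + 1 + 1 = a := by fin_cases a <;> decide

lemma filter_eq_image (x : Fin n → Fin 2) :
    univ.filter (fun y => hammingDist x y = 1)
      = univ.image (fun m => Function.update x m (x m + 1)) := by
  ext y
  simp only [mem_filter, mem_univ, true_and, mem_image]
  constructor
  · intro hy
    rw [hammingDist] at hy
    obtain ⟨m, hm⟩ := card_eq_one.1 hy
    refine ⟨m, ?_⟩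
    have hmem : ∀ l : Fin n, x l ≠ y l ↔ l ∈ ({m} : Finset (Fin n)) := by
      intro l
      rw [← hm]; simp
    funext l
    by_cases hl : l = m
    · subst hl
      have : x l ≠ y l := (hmem l).2 (by simp)
      rw [Function.update_self]
      exact (fin2_eq_add_one this).symm
    · rw [Function.update_of_ne hl]
      by_contra hc
      exact hl (Finset.mem_singleton.1 ((hmem l).1 hc))
  · rintro ⟨m, rfl⟩
    rw [hammingDist]
    have : (univ.filter fun i => x i ≠ Function.update x m (x m + 1) i) = {m} := by
      ext l
      simp only [mem_filter, mem_univ, true_and, mem_singleton]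
      by_cases hl : l = m
      · subst hl
        simp [Function.update_self, fin2_ne_add_one]
      · simp [Function.update_of_ne hl, hl]
    rw [show #{i | x i ≠ Function.update x m (x m + 1) i} = (univ.filter fun i => x i ≠ Function.update x m (x m + 1) i).card from rfl, this, card_singleton]

lemma flip_injective (x : Fin n → Fin 2) :
    Function.Injective (fun m => Function.update x m (x m + 1)) := by
  intro m₁ m₂ h
  by_contra hne
  have h1 : Function.update x m₁ (x m₁ + 1) m₁ = Function.update x m₂ (x m₂ + 1) m₁ :=
    congrFun h m₁
  rw [Function.update_self, Function.update_of_ne (fun hc => hne hc)] at h1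
  exact fin2_ne_add_one (x m₁) h1.symm

lemma nbr_sum (f : (Fin n → Fin 2) → ℝ) (x : Fin n → Fin 2) :
    ∑ y ∈ univ.filter (fun y => hammingDist x y = 1), f y
      = ∑ m : Fin n, f (Function.update x m (x m + 1)) := by
  rw [filter_eq_image, Finset.sum_image]
  intro m₁ _ m₂ _ h
  exact flip_injective x h

lemma chi_update_notMem {S : Finset (Fin n)} {m : Fin n} (hm : m ∉ S)
    (x : Fin n → Fin 2) (v : Fin 2) : chi S (Function.update x m v) = chi S x := by
  refine Finset.prod_congr rfl fun l hl => ?_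
  rw [Function.update_of_ne (by rintro rfl; exact hm hl)]

lemma neg_pow_fin2 (a : Fin 2) : (-1 : ℝ) ^ (((a + 1 : Fin 2)) : ℕ) = -(-1 : ℝ) ^ ((a : ℕ)) := by
  fin_cases a <;> simp [Fin.add_def]

lemma chi_update_mem {S : Finset (Fin n)} {m : Fin n} (hm : m ∈ S)
    (x : Fin n → Fin 2) : chi S (Function.update x m (x m + 1)) = -chi S x := by
  unfold chi
  rw [← Finset.mul_prod_erase S _ hm, ← Finset.mul_prod_erase S
    (fun l => (-1 : ℝ) ^ ((x l : ℕ))) hm]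
  rw [Function.update_self, neg_pow_fin2]
  rw [Finset.prod_congr rfl (fun l hl => by
    rw [Function.update_of_ne (Finset.ne_of_mem_erase hl)])]
  ring

lemma chi_eigen (S : Finset (Fin n)) (x : Fin n → Fin 2) :
    ∑ m : Fin n, chi S (Function.update x m (x m + 1))
      = ((n : ℝ) - 2 * S.card) * chi S x := by
  have hsplit := Finset.sum_filter_add_sum_filter_not univ (fun m => m ∈ S)
    (fun m => chi S (Function.update x m (x m + 1)))
  rw [← hsplit]
  have h1 : ∑ m ∈ univ.filter (fun m => m ∈ S), chi S (Function.update x m (x m + 1))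
      = S.card * (-chi S x) := by
    rw [Finset.sum_congr rfl (fun m hm => chi_update_mem (mem_filter.1 hm).2 x)]
    rw [sum_const, nsmul_eq_mul]
    congr 2
    simp [Finset.filter_mem_eq_inter]
  have h2 : ∑ m ∈ univ.filter (fun m => ¬ m ∈ S), chi S (Function.update x m (x m + 1))
      = ((n : ℝ) - S.card) * chi S x := by
    rw [Finset.sum_congr rfl (fun m hm => chi_update_notMem (mem_filter.1 hm).2 x _)]
    rw [sum_const, nsmul_eq_mul]
    congr 1
    rw [Finset.filter_not, Finset.filter_mem_eq_inter, univ_inter,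
      Finset.card_sdiff_of_subset (subset_univ S), card_univ, Fintype.card_fin]
    have hS : S.card ≤ n := by simpa using card_le_univ S
    exact Nat.cast_sub hS
  rw [h1, h2]
  ring

lemma flip_flip (x : Fin n → Fin 2) (m : Fin n) :
    Function.update (Function.update x m (x m + 1)) m
      (Function.update x m (x m + 1) m + 1) = x := by
  funext l
  by_cases hl : l = m
  · subst hl
    rw [Function.update_self, Function.update_self, fin2_add_one_add_one]
  · rw [Function.update_of_ne hl, Function.update_of_ne hl]

lemma ortho {k : ℕ} {g : (Fin n → Fin 2) → ℝ} (hg : inU n 2 k g)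
    (S : Finset (Fin n)) (h : S.card ≠ k) :
    ∑ x, g x * chi S x = 0 := by
  have heig : ∀ x, ((n : ℝ) - 2 * k) * g x
      = ∑ m : Fin n, g (Function.update x m (x m + 1)) := by
    intro x
    have h0 := hg x
    rw [nbr_sum] at h0
    push_cast at h0
    have hco : ((n:ℝ) - 2*(k:ℝ)) = (n:ℝ) * ((2:ℝ) - 1) - (2:ℝ) * (k:ℝ) := by ring
    rw [hco]
    exact h0
  have hflip : ∀ m : Fin n, ∑ x : Fin n → Fin 2, g (Function.update x m (x m + 1)) * chi S x
      = ∑ x : Fin n → Fin 2, g x * chi S (Function.update x m (x m + 1)) := by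
    intro m
    refine Finset.sum_nbij' (fun x => Function.update x m (x m + 1))
      (fun x => Function.update x m (x m + 1)) (fun _ _ => mem_univ _) (fun _ _ => mem_univ _)
      (fun x _ => flip_flip x m) (fun x _ => flip_flip x m) ?_
    intro x _
    rw [flip_flip]
  set c := ∑ x, g x * chi S x with hc
  have key : ((n:ℝ) - 2*k) * c = ((n:ℝ) - 2*S.card) * c := by
    calc ((n:ℝ) - 2*k) * c = ∑ x, (((n:ℝ) - 2*k) * g x) * chi S x := by
          rw [hc, mul_sum]; exact sum_congr rfl fun x _ => by ring
      _ = ∑ x, (∑ m : Fin n, g (Function.update x m (x m + 1))) * chi S x :=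
          sum_congr rfl fun x _ => by rw [heig x]
      _ = ∑ x, ∑ m : Fin n, g (Function.update x m (x m + 1)) * chi S x :=
          sum_congr rfl fun x _ => by rw [sum_mul]
      _ = ∑ m : Fin n, ∑ x, g (Function.update x m (x m + 1)) * chi S x := Finset.sum_comm
      _ = ∑ m : Fin n, ∑ x, g x * chi S (Function.update x m (x m + 1)) :=
          sum_congr rfl fun m _ => hflip m
      _ = ∑ x, ∑ m : Fin n, g x * chi S (Function.update x m (x m + 1)) := Finset.sum_comm
      _ = ∑ x, g x * (((n:ℝ) - 2*S.card) * chi S x) := by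
          refine sum_congr rfl fun x _ => ?_
          rw [← mul_sum, chi_eigen]
      _ = ((n:ℝ) - 2*S.card) * c := by
          rw [hc, mul_sum]; exact sum_congr rfl fun x _ => by ring
  have h2 : (2*(S.card:ℝ) - 2*k) * c = 0 := by ring_nf; ring_nf at key; linarith
  have hne : (2*(S.card:ℝ) - 2*k) ≠ 0 := by
    intro h0
    apply h
    have : (S.card:ℝ) = k := by linarith
    exact_mod_cast this
  exact (mul_eq_zero.1 h2).resolve_left hne

lemma fin2_prod_factor {a b : Fin 2} (h : a ≠ b) :
    (-1:ℝ)^((a:ℕ)) * (-1:ℝ)^((b:ℕ)) + 1 = 0 := by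
  fin_cases a <;> fin_cases b <;> simp_all

lemma chi_complete (f : (Fin n → Fin 2) → ℝ) (x : Fin n → Fin 2) :
    ∑ S : Finset (Fin n), (∑ y, f y * chi S y) * chi S x = 2 ^ n * f x := by
  have inner : ∀ y : Fin n → Fin 2, ∑ S : Finset (Fin n), chi S y * chi S x
      = if y = x then (2:ℝ)^n else 0 := by
    intro y
    have step : ∑ S : Finset (Fin n), chi S y * chi S x
        = ∏ m : Fin n, (((-1:ℝ)^((y m : ℕ)) * (-1:ℝ)^((x m : ℕ))) + 1) := by
      rw [Finset.prod_add]
      rw [show (univ : Finset (Finset (Fin n))) = (univ : Finset (Fin n)).powerset from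
        (powerset_univ).symm]
      refine sum_congr rfl fun S _ => ?_
      rw [prod_const_one, mul_one]
      unfold chi
      rw [← prod_mul_distrib]
    rw [step]
    by_cases hyx : y = x
    · subst hyx
      rw [if_pos rfl]
      have hfac : ∀ m : Fin n, ((-1:ℝ)^((y m : ℕ)) * (-1:ℝ)^((y m : ℕ)) + 1) = 2 := by
        intro m
        rw [← pow_add, Even.neg_one_pow ⟨(y m : ℕ), rfl⟩]
        norm_num
      rw [Finset.prod_congr rfl fun m _ => hfac m, prod_const, card_univ, Fintype.card_fin]
    · rw [if_neg hyx]
      obtain ⟨m, hm⟩ := Function.ne_iff.1 hyx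
      exact Finset.prod_eq_zero (mem_univ m) (fin2_prod_factor hm)
  calc ∑ S : Finset (Fin n), (∑ y, f y * chi S y) * chi S x
      = ∑ S : Finset (Fin n), ∑ y, f y * chi S y * chi S x := by
        exact sum_congr rfl fun S _ => by rw [sum_mul]
    _ = ∑ y, ∑ S : Finset (Fin n), f y * chi S y * chi S x := Finset.sum_comm
    _ = ∑ y, f y * ∑ S : Finset (Fin n), chi S y * chi S x := by
        refine sum_congr rfl fun y _ => ?_
        rw [mul_sum]
        exact sum_congr rfl fun S _ => by ring
    _ = ∑ y, f y * (if y = x then (2:ℝ)^n else 0) :=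
        sum_congr rfl fun y _ => by rw [inner y]
    _ = 2 ^ n * f x := by
        rw [Finset.sum_congr rfl (fun y _ => mul_ite (y = x) (f y) ((2:ℝ)^n) 0)]
        simp only [mul_zero]
        rw [Finset.sum_ite_eq' univ x (fun y => f y * (2:ℝ)^n)]
        simp [mul_comm]

lemma chi_indV (S U : Finset (Fin n)) :
    chi S (indV U) = ∏ m ∈ S, (if m ∈ U then (-1:ℝ) else 1) := by
  unfold chi indV
  refine prod_congr rfl fun m _ => ?_
  by_cases hm : m ∈ U <;> simp [hm]

lemma prod_if_card (S U : Finset (Fin n)) :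
    ∏ m ∈ S, (if m ∈ U then (-1:ℝ) else 1) = (-1:ℝ)^((S ∩ U).card) := by
  have h1 : ∏ m ∈ S.filter (fun m => m ∈ U), (if m ∈ U then (-1:ℝ) else 1)
      = (-1:ℝ)^((S ∩ U).card) := by
    rw [Finset.prod_congr rfl (fun m hm => if_pos (mem_filter.1 hm).2), Finset.prod_const,
      Finset.filter_mem_eq_inter]
  have h2 : ∏ m ∈ S.filter (fun m => ¬ m ∈ U), (if m ∈ U then (-1:ℝ) else 1) = 1 := by
    rw [Finset.prod_congr rfl (fun m hm => if_neg (mem_filter.1 hm).2)]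
    exact prod_const_one
  rw [← Finset.prod_filter_mul_prod_filter_not S (fun m => m ∈ U), h1, h2, mul_one]

lemma coeff_chi {S T : Finset (Fin n)} (h : S.card < T.card) : coeff (chi S) T = 0 := by
  have key : coeff (chi S) T = ∏ m ∈ T, ((if m ∈ S then (-1:ℝ) else 1) + (-1)) := by
    rw [Finset.prod_add]
    unfold coeff
    refine sum_congr rfl fun U hU => ?_
    rw [chi_indV, prod_if_card, inter_comm, ← prod_if_card U S, Finset.prod_const, mul_comm]
  obtain ⟨m, hmT, hmS⟩ : ∃ m ∈ T, m ∉ S := by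
    by_contra hc
    push_neg at hc
    exact absurd (card_le_card hc) (not_le.2 h)
  rw [key]
  refine Finset.prod_eq_zero hmT ?_
  rw [if_neg hmS]
  norm_num

lemma coeff_eigen {k : ℕ} {g : (Fin n → Fin 2) → ℝ} (hg : inU n 2 k g)
    {T : Finset (Fin n)} (h : k < T.card) : coeff g T = 0 := by
  have hgx : ∀ x, g x
      = (2^n : ℝ)⁻¹ * ∑ S : Finset (Fin n), (∑ y, g y * chi S y) * chi S x := by
    intro x
    rw [chi_complete, inv_mul_cancel_left₀ (by positivity)]
  unfold coeff
  have e : ∀ U ∈ T.powerset, (-1:ℝ)^((T\U).card) * g (indV U)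
      = ∑ S : Finset (Fin n), (2^n : ℝ)⁻¹ *
          ((∑ y, g y * chi S y) * ((-1:ℝ)^((T\U).card) * chi S (indV U))) := by
    intro U _
    rw [hgx (indV U), Finset.mul_sum, Finset.mul_sum]
    exact sum_congr rfl fun S _ => by ring
  rw [sum_congr rfl e, Finset.sum_comm]
  refine Finset.sum_eq_zero fun S _ => ?_
  by_cases hS : S.card = k
  · have e2 : ∀ U ∈ T.powerset, (2^n:ℝ)⁻¹ *
        ((∑ y, g y * chi S y) * ((-1:ℝ)^((T\U).card) * chi S (indV U)))
          = ((2^n:ℝ)⁻¹ * (∑ y, g y * chi S y)) * ((-1:ℝ)^((T\U).card) * chi S (indV U)) :=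
      fun U _ => by ring
    rw [sum_congr rfl e2, ← Finset.mul_sum]
    have e3 : ∑ U ∈ T.powerset, (-1:ℝ)^((T\U).card) * chi S (indV U) = coeff (chi S) T := rfl
    rw [e3, coeff_chi (by rw [hS]; exact h), mul_zero]
  · refine Finset.sum_eq_zero fun U _ => ?_
    rw [ortho hg S hS]
    ring

lemma coeff_zero_of_inUIJ {i j : ℕ} {f : (Fin n → Fin 2) → ℝ} (hf : inUIJ n 2 i j f)
    {T : Finset (Fin n)} (hT : j < T.card) : coeff f T = 0 := by
  obtain ⟨g, hg, rfl⟩ := hf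
  unfold coeff
  have e : ∀ U ∈ T.powerset, (-1:ℝ)^((T\U).card) * (∑ k ∈ Finset.Icc i j, g k) (indV U)
      = ∑ k ∈ Finset.Icc i j, (-1:ℝ)^((T\U).card) * g k (indV U) := by
    intro U _
    rw [Finset.sum_apply, Finset.mul_sum]
  rw [sum_congr rfl e, Finset.sum_comm]
  refine Finset.sum_eq_zero fun k hk => ?_
  have e3 : ∑ U ∈ T.powerset, (-1:ℝ)^((T\U).card) * g k (indV U) = coeff (g k) T := rfl
  rw [e3]
  exact coeff_eigen (hg k hk) (lt_of_le_of_lt (Finset.mem_Icc.1 hk).2 hT)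

lemma claim {f : (Fin n → Fin 2) → ℝ} {S0 : Finset (Fin n)}
    (hmax : ∀ S : Finset (Fin n), S0 ⊂ S → coeff f S = 0) (z : Fin n → Fin 2) :
    ∑ T ∈ S0.powerset, (-1:ℝ)^((S0\T).card) *
        f (fun m => if m ∈ S0 then (if m ∈ T then (1 : Fin 2) else 0) else z m)
      = coeff f S0 := by
  set Z := (toSet z) \ S0 with hZ
  set X := S0 ∪ Z with hX
  have hTZ : ∀ T ∈ S0.powerset,
      toSet (fun m => if m ∈ S0 then (if m ∈ T then (1:Fin 2) else 0) else z m) = T ∪ Z := by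
    intro T hT
    have hTs := mem_powerset.1 hT
    ext m
    simp only [toSet, mem_filter, mem_univ, true_and, mem_union, hZ, mem_sdiff]
    by_cases hm : m ∈ S0
    · by_cases hmT : m ∈ T
      · simp [hm, hmT]
      · simp [hm, hmT]
    · have hmT : m ∉ T := fun hc => hm (hTs hc)
      simp [hm, hmT]
  have step1 : ∀ T ∈ S0.powerset,
      f (fun m => if m ∈ S0 then (if m ∈ T then (1:Fin 2) else 0) else z m)
        = ∑ S ∈ X.powerset, (if S ⊆ T ∪ Z then coeff f S else 0) := by
    intro T hT
    rw [inv_sum f _, hTZ T hT]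
    have hsub : T ∪ Z ⊆ X := union_subset_union (mem_powerset.1 hT) le_rfl
    rw [powerset_eq_filter hsub, sum_filter]
  have e1 : ∑ T ∈ S0.powerset, (-1:ℝ)^((S0\T).card) *
        f (fun m => if m ∈ S0 then (if m ∈ T then (1:Fin 2) else 0) else z m)
      = ∑ S ∈ X.powerset, ∑ T ∈ S0.powerset,
          (if S ⊆ T ∪ Z then (-1:ℝ)^((S0\T).card) * coeff f S else 0) := by
    rw [← Finset.sum_comm]
    refine sum_congr rfl fun T hT => ?_
    rw [step1 T hT, mul_sum]
    exact sum_congr rfl fun S _ => by rw [mul_ite, mul_zero]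
  rw [e1]
  have e2 : ∀ S ∈ X.powerset, ∑ T ∈ S0.powerset,
        (if S ⊆ T ∪ Z then (-1:ℝ)^((S0\T).card) * coeff f S else 0)
      = coeff f S * (if S ∩ S0 = S0 then 1 else 0) := by
    intro S hSX
    have hcond : ∀ T ∈ S0.powerset, (S ⊆ T ∪ Z) ↔ (S ∩ S0 ⊆ T) := by
      intro T hT
      have hTs := mem_powerset.1 hT
      constructor
      · intro hs m hm
        have hm1 := mem_inter.1 hm
        rcases mem_union.1 (hs hm1.1) with h1 | h1
        · exact h1
        · exact absurd hm1.2 (mem_sdiff.1 h1).2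
      · intro hs m hm
        rcases mem_union.1 ((mem_powerset.1 hSX) hm) with h1 | h1
        · exact mem_union_left _ (hs (mem_inter.2 ⟨hm, h1⟩))
        · exact mem_union_right _ h1
    calc ∑ T ∈ S0.powerset, (if S ⊆ T ∪ Z then (-1:ℝ)^((S0\T).card) * coeff f S else 0)
        = ∑ T ∈ S0.powerset, (if S ∩ S0 ⊆ T then (-1:ℝ)^((S0\T).card) * coeff f S else 0) := by
          refine sum_congr rfl fun T hT => ?_
          rw [if_congr (hcond T hT) rfl rfl]
      _ = (∑ T ∈ S0.powerset.filter (fun T => S ∩ S0 ⊆ T), (-1:ℝ)^((S0\T).card)) * coeff f S := by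
          rw [← sum_filter, sum_mul]
      _ = coeff f S * (if S ∩ S0 = S0 then 1 else 0) := by
          rw [kernel2 inter_subset_right, mul_comm]
  rw [sum_congr rfl e2]
  rw [Finset.sum_eq_single_of_mem S0 (mem_powerset.2 subset_union_left)]
  · rw [inter_self, if_pos rfl, mul_one]
  · intro S hSX hne
    by_cases hs : S ∩ S0 = S0
    · have hsub : S0 ⊆ S := by rw [← hs]; exact inter_subset_left
      have hss : S0 ⊂ S := lt_of_le_of_ne hsub (Ne.symm hne)
      rw [hmax S hss, zero_mul]
    · rw [if_neg hs, mul_zero]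

end HS

/-- If `0 ≤ i ≤ j ≤ n`, `i + j ≤ n` and `f` is a nonzero function in `U_{[i,j]}(n,2)`,
then `|Supp(f)| ≥ 2^{n-j}`. -/
theorem stmt0 (n i j : ℕ) (hn : 1 ≤ n) (hij : i ≤ j) (hjn : j ≤ n) (hsum : i + j ≤ n)
    (f : (Fin n → Fin 2) → ℝ) (hf : inUIJ n 2 i j f) (hne : f ≠ 0) :
    2 ^ (n - j) ≤ suppCard n 2 f := by
  classical
  have hex : ∃ S : Finset (Fin n), HS.coeff f S ≠ 0 := by
    by_contra hc
    push_neg at hc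
    apply hne
    funext x
    rw [show f x = ∑ S ∈ (HS.toSet x).powerset, HS.coeff f S from HS.inv_sum f x]
    exact Finset.sum_eq_zero fun S _ => hc S
  obtain ⟨S1, hS1⟩ := hex
  obtain ⟨S0, hS0mem, hS0max⟩ := Finset.exists_max_image
    (Finset.univ.filter (fun S : Finset (Fin n) => HS.coeff f S ≠ 0)) Finset.card
    ⟨S1, by simp [hS1]⟩
  have hS0ne : HS.coeff f S0 ≠ 0 := (Finset.mem_filter.1 hS0mem).2
  have hmax : ∀ S : Finset (Fin n), S0 ⊂ S → HS.coeff f S = 0 := by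
    intro S hS
    by_contra hc
    have h1 := hS0max S (by simp [hc])
    exact absurd (Finset.card_lt_card hS) (not_lt.2 h1)
  have hS0j : S0.card ≤ j := by
    by_contra hc
    push_neg at hc
    exact hS0ne (HS.coeff_zero_of_inUIJ hf hc)
  have key : ∀ z : Fin n → Fin 2, ∃ T, T ∈ S0.powerset ∧
      f (fun m => if m ∈ S0 then (if m ∈ T then (1 : Fin 2) else 0) else z m) ≠ 0 := by
    intro z
    by_contra hc
    push_neg at hc
    have h1 := HS.claim hmax z
    rw [Finset.sum_eq_zero (fun T hT => by rw [hc T hT, mul_zero])] at h1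
    exact hS0ne h1.symm
  choose T hTmem hTne using key
  have hmapsto : ∀ U ∈ S0ᶜ.powerset,
      (fun m => if m ∈ S0 then (if m ∈ T (HS.indV U) then (1 : Fin 2) else 0)
        else HS.indV U m) ∈ Finset.univ.filter (fun x => f x ≠ 0) :=
    fun U _ => Finset.mem_filter.2 ⟨Finset.mem_univ _, hTne (HS.indV U)⟩
  have hinj : Set.InjOn (fun U : Finset (Fin n) =>
      (fun m => if m ∈ S0 then (if m ∈ T (HS.indV U) then (1 : Fin 2) else 0)
        else HS.indV U m)) (S0ᶜ.powerset : Finset (Finset (Fin n))) := by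
    intro U1 hU1 U2 hU2 h12
    simp only [Finset.mem_coe, Finset.mem_powerset] at hU1 hU2
    ext m
    by_cases hm : m ∈ S0
    · constructor
      · intro hmU
        exact absurd hm (Finset.mem_compl.1 (hU1 hmU))
      · intro hmU
        exact absurd hm (Finset.mem_compl.1 (hU2 hmU))
    · have h1 := congrFun h12 m
      simp only [if_neg hm, HS.indV] at h1
      by_cases hm1 : m ∈ U1 <;> by_cases hm2 : m ∈ U2 <;> simp_all
  have hcard := Finset.card_le_card_of_injOn _ hmapsto hinj
  rw [Finset.card_powerset, Finset.card_compl, Fintype.card_fin] at hcard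
  have hle : 2 ^ (n - j) ≤ 2 ^ (n - S0.card) :=
    Nat.pow_le_pow_right (by norm_num) (by omega)
  exact le_trans hle hcard
end

section
/- Let n ≥ 1 and let 0 ≤ i ≤ j ≤ n with i + j ≤ n. Then there exists a nonzero function f : Σ_2^n → ℝ in U_{[i,j]}(n,2) whose support has cardinality exactly 2^{n-j}. -/
open Finset

section Neighbors

variable {n q : ℕ}

lemma hammingDist_cons (a b : Fin q) (x y : Fin n → Fin q) :
    hammingDist (Fin.cons a x : Fin (n + 1) → Fin q) (Fin.cons b y) =
      (if a = b then 0 else 1) + hammingDist x y := by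
  simp only [hammingDist, card_filter, Fin.sum_univ_succ, Fin.cons_zero, Fin.cons_succ, ite_not]

lemma sum_neighbors_cons (a : Fin q) (y : Fin n → Fin q) (F : (Fin (n + 1) → Fin q) → ℝ) :
    ∑ z ∈ univ.filter (fun z => hammingDist (Fin.cons a y : Fin (n + 1) → Fin q) z = 1), F z =
      ∑ b ∈ univ.erase a, F (Fin.cons b y) +
        ∑ y' ∈ univ.filter (fun y' => hammingDist y y' = 1), F (Fin.cons a y') := by
  rw [sum_filter, ← (Fin.consEquiv fun _ => Fin q).sum_comp, Fintype.sum_prod_type,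
    ← add_sum_erase _ _ (mem_univ a), add_comm, sum_filter]
  congr 1
  · refine sum_congr rfl fun b hb => ?_
    simp [Fin.consEquiv, hammingDist_cons, (ne_of_mem_erase hb).symm, eq_comm]
  · simp [Fin.consEquiv, hammingDist_cons]

end Neighbors

def finTwoSign (a : Fin 2) : ℝ := (-1) ^ (a : ℕ)

lemma sum_erase_finTwoSign (a : Fin 2) : ∑ b ∈ univ.erase a, finTwoSign b = -finTwoSign a := by
  simp [sum_erase_eq_sub, Fin.sum_univ_two, finTwoSign]

def consMul {n q : ℕ} (c : Fin q → ℝ) (f : (Fin n → Fin q) → ℝ) : (Fin (n + 1) → Fin q) → ℝ :=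
  fun x => c (x 0) * f (Fin.tail x)

namespace inU

variable {n q k : ℕ} {f g : (Fin n → Fin q) → ℝ}

lemma zero : inU n q k 0 := by
  simp [inU]

lemma add (hf : inU n q k f) (hg : inU n q k g) : inU n q k (f + g) := fun x => by
  simp only [Pi.add_apply, sum_add_distrib]
  linear_combination hf x + hg x

lemma sub (hf : inU n q k f) (hg : inU n q k g) : inU n q k (f - g) := fun x => by
  simp only [Pi.sub_apply, sum_sub_distrib]
  linear_combination hf x - hg x

lemma comp_tail (hf : inU n q k f) : inU (n + 1) q k (f ∘ Fin.tail) := by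
  intro x
  induction x using Fin.consCases with
  | _ a y =>
  have hq : ((univ.erase a).card : ℝ) = q - 1 := by
    rw [card_erase_of_mem (mem_univ a), card_univ, Fintype.card_fin, Nat.cast_pred a.pos]
  simp only [sum_neighbors_cons, Function.comp_apply, Fin.tail_cons, sum_const, nsmul_eq_mul, hq,
    ← hf y]
  push_cast
  ring

lemma consMul_finTwoSign {f : (Fin n → Fin 2) → ℝ} (hf : inU n 2 k f) :
    inU (n + 1) 2 (k + 1) (consMul finTwoSign f) := by
  intro x
  induction x using Fin.consCases with
  | _ a y =>
  simp only [consMul, sum_neighbors_cons, Fin.cons_zero, Fin.tail_cons, ← sum_mul, ← mul_sum,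
    sum_erase_finTwoSign, ← hf y]
  push_cast
  ring

end inU

namespace inUIJ

variable {n q i j : ℕ} {f g : (Fin n → Fin q) → ℝ}

lemma add (hf : inUIJ n q i j f) (hg : inUIJ n q i j g) : inUIJ n q i j (f + g) := by
  obtain ⟨F, hF, rfl⟩ := hf
  obtain ⟨G, hG, rfl⟩ := hg
  exact ⟨F + G, fun k hk => (hF k hk).add (hG k hk), by simp [sum_add_distrib]⟩

lemma sub (hf : inUIJ n q i j f) (hg : inUIJ n q i j g) : inUIJ n q i j (f - g) := by
  obtain ⟨F, hF, rfl⟩ := hf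
  obtain ⟨G, hG, rfl⟩ := hg
  exact ⟨F - G, fun k hk => (hF k hk).sub (hG k hk), by simp [sum_sub_distrib]⟩

lemma mono {i' j' : ℕ} (hf : inUIJ n q i j f) (hi : i' ≤ i) (hj : j ≤ j') :
    inUIJ n q i' j' f := by
  obtain ⟨F, hF, rfl⟩ := hf
  refine ⟨fun k => if k ∈ Icc i j then F k else 0, fun k _ => ?_, ?_⟩
  · dsimp only
    split_ifs with hk
    exacts [hF k hk, inU.zero]
  · rw [sum_ite_mem, inter_eq_right.mpr (Icc_subset_Icc hi hj)]

lemma comp_tail (hf : inUIJ n q i j f) : inUIJ (n + 1) q i j (f ∘ Fin.tail) := by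
  obtain ⟨F, hF, rfl⟩ := hf
  refine ⟨fun k => F k ∘ Fin.tail, fun k hk => (hF k hk).comp_tail, ?_⟩
  ext x
  simp

lemma consMul_finTwoSign {f : (Fin n → Fin 2) → ℝ} (hf : inUIJ n 2 i j f) :
    inUIJ (n + 1) 2 (i + 1) (j + 1) (consMul finTwoSign f) := by
  obtain ⟨F, hF, rfl⟩ := hf
  refine ⟨fun k => consMul finTwoSign (F (k - 1)), fun k hk => ?_, ?_⟩
  · obtain ⟨k, rfl⟩ : ∃ k', k = k' + 1 := ⟨k - 1, by simp only [mem_Icc] at hk; omega⟩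
    exact (hF k (by simpa using hk)).consMul_finTwoSign
  · rw [← map_add_right_Icc, sum_map]
    ext x
    simp [consMul, mul_sum]

end inUIJ

section SuppCard

variable {n q : ℕ}

lemma suppCard_cons (F : Fin q → (Fin n → Fin q) → ℝ) :
    suppCard (n + 1) q (fun x => F (x 0) (Fin.tail x)) = ∑ a, suppCard n q (F a) := by
  simp only [suppCard, card_filter]
  rw [← (Fin.consEquiv fun _ => Fin q).sum_comp, Fintype.sum_prod_type]
  simp [Fin.consEquiv]

lemma suppCard_comp_tail (f : (Fin n → Fin q) → ℝ) :
    suppCard (n + 1) q (f ∘ Fin.tail) = q * suppCard n q f :=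
  (suppCard_cons fun _ => f).trans (by simp)

lemma suppCard_consMul (c : Fin q → ℝ) (f : (Fin n → Fin q) → ℝ) :
    suppCard (n + 1) q (consMul c f) = #{a | c a ≠ 0} * suppCard n q f := by
  refine (suppCard_cons fun a y => c a * f y).trans ?_
  rw [card_filter, sum_mul]
  refine sum_congr rfl fun a _ => ?_
  by_cases ha : c a = 0 <;> simp [suppCard, ha]

end SuppCard

def pairMul {n : ℕ} (f : (Fin n → Fin 2) → ℝ) : (Fin (n + 2) → Fin 2) → ℝ :=
  fun x => (finTwoSign (x 0) - finTwoSign (x 1)) * f (Fin.tail (Fin.tail x))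

section Extensions

variable {n i j : ℕ} {f : (Fin n → Fin 2) → ℝ}

lemma inUIJ.consMul_one_add_finTwoSign (hf : inUIJ n 2 i j f) :
    inUIJ (n + 1) 2 i (j + 1) (consMul (fun a => 1 + finTwoSign a) f) := by
  have hsplit : consMul (fun a => 1 + finTwoSign a) f = f ∘ Fin.tail + consMul finTwoSign f := by
    ext x
    simp [consMul, add_mul]
  rw [hsplit]
  exact (hf.comp_tail.mono le_rfl j.le_succ).add (hf.consMul_finTwoSign.mono i.le_succ le_rfl)

lemma inUIJ.pairMul (hf : inUIJ n 2 i j f) : inUIJ (n + 2) 2 (i + 1) (j + 1) (pairMul f) := by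
  have hsplit : _root_.pairMul f =
      consMul finTwoSign (f ∘ Fin.tail) - consMul finTwoSign f ∘ Fin.tail := by
    ext x
    simp only [_root_.pairMul, consMul, Pi.sub_apply, Function.comp_apply, Fin.tail,
      Fin.succ_zero_eq_one]
    ring
  rw [hsplit]
  exact hf.comp_tail.consMul_finTwoSign.sub hf.consMul_finTwoSign.comp_tail

lemma suppCard_consMul_one_add_finTwoSign :
    suppCard (n + 1) 2 (consMul (fun a => 1 + finTwoSign a) f) = suppCard n 2 f := by
  rw [suppCard_consMul, card_filter, Fin.sum_univ_two]
  norm_num [finTwoSign]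

lemma suppCard_pairMul : suppCard (n + 2) 2 (pairMul f) = 2 * suppCard n 2 f := by
  refine (suppCard_cons fun a => consMul (fun b => finTwoSign a - finTwoSign b) f).trans ?_
  simp only [suppCard_consMul, card_filter, Fin.sum_univ_two]
  norm_num [finTwoSign, two_mul]

end Extensions

theorem exists_inUIJ_suppCard_eq {n i j : ℕ} (hij : i ≤ j) (hsum : i + j ≤ n) :
    ∃ f : (Fin n → Fin 2) → ℝ, inUIJ n 2 i j f ∧ suppCard n 2 f = 2 ^ (n - j) := by
  induction n using Nat.strong_induction_on generalizing i j with
  | _ n ih =>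
  rcases n with _ | n
  · obtain ⟨rfl, rfl⟩ : i = 0 ∧ j = 0 := by omega
    exact ⟨1, ⟨fun _ => 1, by simp [inU, hammingDist], by simp⟩, by simp [suppCard]⟩
  by_cases hfree : i + j ≤ n
  · obtain ⟨f, hf, hs⟩ := ih n n.lt_succ_self hij hfree
    refine ⟨f ∘ Fin.tail, hf.comp_tail, ?_⟩
    rw [suppCard_comp_tail, hs, ← pow_succ', Nat.sub_add_comm (by omega)]
  rcases hij.lt_or_eq with hlt | rfl
  · obtain ⟨j, rfl⟩ : ∃ j', j = j' + 1 := ⟨j - 1, by omega⟩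
    obtain ⟨f, hf, hs⟩ := ih n n.lt_succ_self (i := i) (j := j) (by omega) (by omega)
    exact ⟨_, hf.consMul_one_add_finTwoSign, by
      rw [suppCard_consMul_one_add_finTwoSign, hs, Nat.add_sub_add_right]⟩
  · obtain ⟨i, rfl⟩ : ∃ i', i = i' + 1 := ⟨i - 1, by omega⟩
    obtain ⟨m, rfl⟩ : ∃ m, n = m + 1 := ⟨n - 1, by omega⟩
    obtain ⟨f, hf, hs⟩ := ih m (by omega) (i := i) (j := i) le_rfl (by omega)
    refine ⟨pairMul f, hf.pairMul, ?_⟩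
    rw [suppCard_pairMul, hs, ← pow_succ']
    congr 1
    omega

theorem stmt1_general (n i j : ℕ) (hij : i ≤ j) (hsum : i + j ≤ n) :
    ∃ f : (Fin n → Fin 2) → ℝ, inUIJ n 2 i j f ∧ f ≠ 0 ∧ suppCard n 2 f = 2 ^ (n - j) := by
  obtain ⟨f, hf, hs⟩ := exists_inUIJ_suppCard_eq hij hsum
  refine ⟨f, hf, ?_, hs⟩
  rintro rfl
  have hzero : suppCard n 2 0 = 0 := by simp [suppCard]
  exact pow_ne_zero _ two_ne_zero (hs.symm.trans hzero)

/-- If `0 ≤ i ≤ j ≤ n` and `i + j ≤ n`, then there is a nonzero function in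
`U_{[i,j]}(n,2)` whose support has cardinality exactly `2^{n-j}`. -/
theorem stmt1 (n i j : ℕ) (hn : 1 ≤ n) (hij : i ≤ j) (hjn : j ≤ n) (hsum : i + j ≤ n) :
    ∃ f : (Fin n → Fin 2) → ℝ, inUIJ n 2 i j f ∧ f ≠ 0 ∧ suppCard n 2 f = 2 ^ (n - j) :=
  stmt1_general n i j hij hsum
end

section
/- Let n ≥ 1 and let 0 ≤ i ≤ j ≤ n with i + j > n. If f : Σ_2^n → ℝ is a nonzero function in U_{[i,j]}(n,2), then the cardinality of the support of f is at least 2^{i}. -/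
/-! Multiplying by the character `χ(x) = (-1)^{|x|}` maps the eigenspace `U_k` onto `U_{n-k}`
without changing supports, so it suffices to show that a nonzero function of degree at most `d`
(a sum of eigenfunctions in `U_0, …, U_d`) has at least `2^{n-d}` nonzero values. Restrict `f` to
the two subcubes `x₀ = 0` and `x₀ = 1`: the sum of the restrictions of an eigenfunction of
eigenvalue `μ` has eigenvalue `μ - 1` and their difference has eigenvalue `μ + 1`, so both
restrictions have degree at most `d` and their difference has degree at most `d - 1`. If both
restrictions are nonzero, induct on each; otherwise the difference carries the whole support. -/

open Finset Module.End

namespace BooleanCube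

lemma fin_two_eq_add_ite_iff (a b : Fin 2) (p : Prop) [Decidable p] :
    b = a + (if p then 1 else 0) ↔ (a ≠ b ↔ p) := by
  by_cases hp : p <;> simp only [hp, if_true, if_false, iff_true, iff_false, add_zero, not_not]
  · revert a b; decide
  · exact eq_comm

lemma eq_add_single_iff {ι : Type*} [DecidableEq ι] (x y : ι → Fin 2) (t : ι) :
    y = x + Pi.single t 1 ↔ ∀ i, (x i ≠ y i ↔ i = t) := by
  simp only [funext_iff, Pi.add_apply, Pi.single_apply, fin_two_eq_add_ite_iff]

lemma hammingDist_eq_one_iff {ι : Type*} [Fintype ι] [DecidableEq ι] {x y : ι → Fin 2} :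
    hammingDist x y = 1 ↔ ∃ t, y = x + Pi.single t 1 := by
  simp only [hammingDist, card_eq_one, eq_add_single_iff, Finset.ext_iff, mem_filter, mem_univ,
    true_and, mem_singleton]

theorem sum_hammingDist_eq_one {ι M : Type*} [Fintype ι] [DecidableEq ι] [AddCommMonoid M]
    (x : ι → Fin 2) (f : (ι → Fin 2) → M) :
    ∑ y ∈ univ.filter (fun y => hammingDist x y = 1), f y = ∑ t, f (x + Pi.single t 1) := by
  have hinj : Function.Injective fun t : ι => x + Pi.single t 1 := fun s t hst =>
    ((eq_add_single_iff x (x + Pi.single s 1) t).1 hst s).1 (by simp)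
  have himage : univ.filter (fun y => hammingDist x y = 1) = univ.image (x + Pi.single · 1) := by
    ext y
    simp only [mem_filter, mem_univ, true_and, mem_image, hammingDist_eq_one_iff]
    exact exists_congr fun _ => eq_comm
  rw [himage, sum_image hinj.injOn]

def adj (n : ℕ) : Module.End ℝ ((Fin n → Fin 2) → ℝ) where
  toFun f x := ∑ t, f (x + Pi.single t 1)
  map_add' _ _ := funext fun _ => sum_add_distrib
  map_smul' _ _ := funext fun _ => (mul_sum ..).symm

@[simp]
lemma adj_apply (n : ℕ) (f : (Fin n → Fin 2) → ℝ) (x : Fin n → Fin 2) :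
    adj n f x = ∑ t, f (x + Pi.single t 1) :=
  rfl

abbrev level (n k : ℕ) : Submodule ℝ ((Fin n → Fin 2) → ℝ) :=
  eigenspace (adj n) ((n : ℝ) - 2 * k)

lemma inU_two_iff_mem_level {n k : ℕ} {f : (Fin n → Fin 2) → ℝ} :
    inU n 2 k f ↔ f ∈ level n k := by
  rw [mem_eigenspace_iff, funext_iff, inU]
  refine forall_congr' fun x => ?_
  rw [sum_hammingDist_eq_one, eq_comm]
  norm_num

def degreeLE (n d : ℕ) : Submodule ℝ ((Fin n → Fin 2) → ℝ) :=
  ⨆ (k : ℕ) (_ : k ≤ d), level n k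

lemma level_le_degreeLE {n k d : ℕ} (h : k ≤ d) : level n k ≤ degreeLE n d :=
  le_iSup₂ (f := fun k (_ : k ≤ d) => level n k) k h

lemma degreeLE_mono (n : ℕ) : Monotone (degreeLE n) := fun _ _ h =>
  iSup₂_le fun _ hk => level_le_degreeLE (hk.trans h)

theorem eigenspace_adj_eq_bot {n : ℕ} {μ : ℝ} (hμ : n < |μ|) : eigenspace (adj n) μ = ⊥ := by
  refine (Submodule.eq_bot_iff _).2 fun f hf => ?_
  rw [mem_eigenspace_iff] at hf
  obtain ⟨x₀, hx₀⟩ := Finite.exists_max fun x => |f x|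
  have hbound : |μ| * |f x₀| ≤ n * |f x₀| :=
    calc |μ| * |f x₀| = |∑ t, f (x₀ + Pi.single t 1)| := by
          rw [← abs_mul, ← smul_eq_mul, ← Pi.smul_apply, ← hf, adj_apply]
      _ ≤ ∑ t, |f (x₀ + Pi.single t 1)| := abs_sum_le_sum_abs _ _
      _ ≤ ∑ _t : Fin n, |f x₀| := sum_le_sum fun t _ => hx₀ _
      _ = n * |f x₀| := by simp
  have hx₀_zero : |f x₀| ≤ 0 := by nlinarith [abs_nonneg (f x₀)]
  funext x
  exact abs_nonpos_iff.1 ((hx₀ x).trans hx₀_zero)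

lemma cons_add_single_zero {α : Type*} [AddZeroClass α] {n : ℕ} (b a : α) (x : Fin n → α) :
    (Fin.cons b x : Fin (n + 1) → α) + Pi.single 0 a = Fin.cons (b + a) x := by
  funext i
  cases i using Fin.cases <;> simp [Fin.succ_ne_zero]

lemma cons_add_single_succ {α : Type*} [AddZeroClass α] {n : ℕ} (b a : α) (x : Fin n → α)
    (t : Fin n) :
    (Fin.cons b x : Fin (n + 1) → α) + Pi.single t.succ a = Fin.cons b (x + Pi.single t a) := by
  funext i
  cases i using Fin.cases <;> simp [Pi.single_apply, (Fin.succ_ne_zero _).symm]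

section Slices

variable {n : ℕ}

def slice (b : Fin 2) : ((Fin (n + 1) → Fin 2) → ℝ) →ₗ[ℝ] (Fin n → Fin 2) → ℝ :=
  LinearMap.funLeft ℝ ℝ (Fin.cons (α := fun _ => Fin 2) b)

@[simp]
lemma slice_apply (b : Fin 2) (f : (Fin (n + 1) → Fin 2) → ℝ) (x : Fin n → Fin 2) :
    slice b f x = f (Fin.cons b x) :=
  rfl

lemma adj_cons (f : (Fin (n + 1) → Fin 2) → ℝ) (b : Fin 2) (x : Fin n → Fin 2) :
    adj (n + 1) f (Fin.cons b x) = f (Fin.cons (b + 1) x) + adj n (slice b f) x := by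
  simp only [adj_apply, Fin.sum_univ_succ, cons_add_single_zero, cons_add_single_succ, slice_apply]

lemma slice_add_slice_mem_eigenspace {f : (Fin (n + 1) → Fin 2) → ℝ} {μ : ℝ}
    (hf : f ∈ eigenspace (adj (n + 1)) μ) :
    slice 0 f + slice 1 f ∈ eigenspace (adj n) (μ - 1) := by
  rw [mem_eigenspace_iff] at hf ⊢
  funext x
  have h₀ := congrFun hf (Fin.cons 0 x)
  have h₁ := congrFun hf (Fin.cons 1 x)
  simp only [adj_cons, Pi.smul_apply, smul_eq_mul] at h₀ h₁
  simp only [map_add, Pi.add_apply, Pi.smul_apply, smul_eq_mul, slice_apply]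
  rw [show (1 + 1 : Fin 2) = 0 from rfl, zero_add] at *
  linarith

lemma slice_sub_slice_mem_eigenspace {f : (Fin (n + 1) → Fin 2) → ℝ} {μ : ℝ}
    (hf : f ∈ eigenspace (adj (n + 1)) μ) :
    slice 0 f - slice 1 f ∈ eigenspace (adj n) (μ + 1) := by
  rw [mem_eigenspace_iff] at hf ⊢
  funext x
  have h₀ := congrFun hf (Fin.cons 0 x)
  have h₁ := congrFun hf (Fin.cons 1 x)
  simp only [adj_cons, Pi.smul_apply, smul_eq_mul] at h₀ h₁
  simp only [map_sub, Pi.sub_apply, Pi.smul_apply, smul_eq_mul, slice_apply]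
  rw [show (1 + 1 : Fin 2) = 0 from rfl, zero_add] at *
  linarith

variable {f : (Fin (n + 1) → Fin 2) → ℝ}

lemma slice_add_slice_mem_level {k : ℕ} (hf : f ∈ level (n + 1) k) :
    slice 0 f + slice 1 f ∈ level n k := by
  convert slice_add_slice_mem_eigenspace hf using 2
  push_cast
  ring

lemma slice_sub_slice_mem_level {k : ℕ} (hf : f ∈ level (n + 1) (k + 1)) :
    slice 0 f - slice 1 f ∈ level n k := by
  convert slice_sub_slice_mem_eigenspace hf using 2
  push_cast
  ring

lemma slice_eq_slice_of_mem_level_zero (hf : f ∈ level (n + 1) 0) : slice 0 f = slice 1 f := by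
  have hμ : (n : ℝ) < |((n + 1 : ℕ) : ℝ) - 2 * ((0 : ℕ) : ℝ) + 1| := by
    push_cast
    rw [mul_zero, sub_zero, abs_of_pos (by positivity)]
    linarith
  have hdiff := slice_sub_slice_mem_eigenspace hf
  rwa [eigenspace_adj_eq_bot hμ, Submodule.mem_bot, sub_eq_zero] at hdiff

lemma slice_add_slice_mem_degreeLE {d : ℕ} (hf : f ∈ degreeLE (n + 1) d) :
    slice 0 f + slice 1 f ∈ degreeLE n d :=
  (iSup₂_le fun _ hk _ hg => level_le_degreeLE hk (slice_add_slice_mem_level hg) :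
    degreeLE (n + 1) d ≤ (degreeLE n d).comap (slice 0 + slice 1)) hf

lemma slice_sub_slice_mem_degreeLE {d : ℕ} (hf : f ∈ degreeLE (n + 1) (d + 1)) :
    slice 0 f - slice 1 f ∈ degreeLE n d := by
  refine (iSup₂_le fun k hk g hg => ?_ :
    degreeLE (n + 1) (d + 1) ≤ (degreeLE n d).comap (slice 0 - slice 1)) hf
  cases k with
  | zero =>
    simp [Submodule.mem_comap, slice_eq_slice_of_mem_level_zero hg]
  | succ k =>
    exact level_le_degreeLE (by omega) (slice_sub_slice_mem_level hg)

lemma slice_eq_slice_of_mem_degreeLE_zero (hf : f ∈ degreeLE (n + 1) 0) :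
    slice 0 f = slice 1 f := by
  refine sub_eq_zero.1 ((iSup₂_le fun k hk g hg => ?_ :
    degreeLE (n + 1) 0 ≤ LinearMap.ker (slice 0 - slice 1)) hf)
  obtain rfl : k = 0 := by omega
  simp [slice_eq_slice_of_mem_level_zero hg]

lemma slice_mem_degreeLE {d : ℕ} (hf : f ∈ degreeLE (n + 1) d) (b : Fin 2) :
    slice b f ∈ degreeLE n d := by
  have hsum := slice_add_slice_mem_degreeLE hf
  have hdiff : slice 0 f - slice 1 f ∈ degreeLE n d := by
    cases d with
    | zero => simp [slice_eq_slice_of_mem_degreeLE_zero hf]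
    | succ d => exact degreeLE_mono n d.le_succ (slice_sub_slice_mem_degreeLE hf)
  revert b
  rw [Fin.forall_fin_two]
  constructor
  · convert (degreeLE n d).smul_mem (2⁻¹ : ℝ) (add_mem hsum hdiff) using 1
    module
  · convert (degreeLE n d).smul_mem (2⁻¹ : ℝ) (sub_mem hsum hdiff) using 1
    module

end Slices

section Support

variable {n : ℕ}

@[simp]
lemma suppCard_zero : suppCard n 2 0 = 0 := by
  simp [suppCard]

@[simp]
lemma suppCard_neg (f : (Fin n → Fin 2) → ℝ) : suppCard n 2 (-f) = suppCard n 2 f := by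
  simp [suppCard]

lemma suppCard_pos {f : (Fin n → Fin 2) → ℝ} (hf : f ≠ 0) : 0 < suppCard n 2 f := by
  obtain ⟨x, hx⟩ := Function.ne_iff.1 hf
  exact card_pos.2 ⟨x, by simpa using hx⟩

lemma suppCard_sub_of_eq_zero_or_eq_zero {f g : (Fin n → Fin 2) → ℝ} (h : f = 0 ∨ g = 0) :
    suppCard n 2 (f - g) = suppCard n 2 f + suppCard n 2 g := by
  rcases h with rfl | rfl <;> simp

lemma suppCard_eq_suppCard_slice_add (f : (Fin (n + 1) → Fin 2) → ℝ) :
    suppCard (n + 1) 2 f = suppCard n 2 (slice 0 f) + suppCard n 2 (slice 1 f) := by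
  simp only [suppCard, card_filter]
  rw [← (Fin.consEquiv fun _ => Fin 2).sum_comp, Fintype.sum_prod_type, Fin.sum_univ_two]
  rfl

lemma eq_zero_of_slice_eq_zero {f : (Fin (n + 1) → Fin 2) → ℝ} (h₀ : slice 0 f = 0)
    (h₁ : slice 1 f = 0) : f = 0 := by
  funext z
  induction z using Fin.consCases with
  | cons b x =>
    revert b
    rw [Fin.forall_fin_two]
    exact ⟨congrFun h₀ x, congrFun h₁ x⟩

end Support

theorem two_pow_le_two_pow_mul_suppCard {n d : ℕ} {f : (Fin n → Fin 2) → ℝ}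
    (hf : f ∈ degreeLE n d) (hne : f ≠ 0) : 2 ^ n ≤ 2 ^ d * suppCard n 2 f := by
  induction n generalizing d with
  | zero => simpa using Nat.mul_le_mul Nat.one_le_two_pow (suppCard_pos hne)
  | succ n ih =>
    rw [suppCard_eq_suppCard_slice_add, pow_succ]
    by_cases hboth : slice 0 f ≠ 0 ∧ slice 1 f ≠ 0
    · have h₀ := ih (slice_mem_degreeLE hf 0) hboth.1
      have h₁ := ih (slice_mem_degreeLE hf 1) hboth.2
      rw [mul_add]
      omega
    · have hzero : slice 0 f = 0 ∨ slice 1 f = 0 := by tauto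
      have hdiff : slice 0 f - slice 1 f ≠ 0 := fun h => hne <| by
        rw [sub_eq_zero] at h
        rcases hzero with h₀ | h₁
        · exact eq_zero_of_slice_eq_zero h₀ (h ▸ h₀)
        · exact eq_zero_of_slice_eq_zero (h ▸ h₁) h₁
      rw [← suppCard_sub_of_eq_zero_or_eq_zero hzero]
      cases d with
      | zero => exact absurd (sub_eq_zero.2 (slice_eq_slice_of_mem_degreeLE_zero hf)) hdiff
      | succ d =>
        have := ih (slice_sub_slice_mem_degreeLE hf) hdiff
        rw [pow_succ]
        nlinarith

def chi (n : ℕ) : (Fin n → Fin 2) → ℝ := fun x => ∏ t, (-1) ^ (x t : ℕ)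

lemma neg_one_pow_val_add (a b : Fin 2) :
    (-1 : ℝ) ^ ((a + b : Fin 2) : ℕ) = (-1) ^ (a : ℕ) * (-1) ^ (b : ℕ) := by
  fin_cases a <;> fin_cases b <;> norm_num [show (1 + 1 : Fin 2) = 0 from rfl]

lemma chi_add {n : ℕ} (x y : Fin n → Fin 2) : chi n (x + y) = chi n x * chi n y := by
  simp only [chi, Pi.add_apply, neg_one_pow_val_add, prod_mul_distrib]

lemma chi_single {n : ℕ} (t : Fin n) : chi n (Pi.single t 1) = -1 := by
  rw [chi, prod_eq_single t (fun s _ hs => by simp [hs]) (by simp)]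
  simp

lemma chi_mul_chi (n : ℕ) : chi n * chi n = 1 := by
  funext x
  simp [chi, ← prod_mul_distrib, ← mul_pow]

lemma chi_mul_mem_eigenspace {n : ℕ} {f : (Fin n → Fin 2) → ℝ} {μ : ℝ}
    (hf : f ∈ eigenspace (adj n) μ) : chi n * f ∈ eigenspace (adj n) (-μ) := by
  rw [mem_eigenspace_iff] at hf ⊢
  funext x
  have hx := congrFun hf x
  simp only [adj_apply, Pi.mul_apply, Pi.smul_apply, smul_eq_mul, chi_add, chi_single] at hx ⊢
  rw [← mul_sum, hx]
  ring

lemma chi_mul_mem_level {n k : ℕ} (hk : k ≤ n) {f : (Fin n → Fin 2) → ℝ} (hf : f ∈ level n k) :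
    chi n * f ∈ level n (n - k) := by
  convert chi_mul_mem_eigenspace hf using 2
  push_cast [Nat.cast_sub hk]
  ring

lemma suppCard_chi_mul {n : ℕ} (f : (Fin n → Fin 2) → ℝ) :
    suppCard n 2 (chi n * f) = suppCard n 2 f := by
  have hchi (x) : chi n x ≠ 0 := left_ne_zero_of_mul_eq_one (congrFun (chi_mul_chi n) x)
  simp [suppCard, hchi]

end BooleanCube

open BooleanCube in
theorem stmt2_general (n i j : ℕ) (hij : i ≤ j) (hjn : j ≤ n)
    (f : (Fin n → Fin 2) → ℝ) (hf : inUIJ n 2 i j f) (hne : f ≠ 0) :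
    2 ^ i ≤ suppCard n 2 f := by
  obtain ⟨g, hg, rfl⟩ := hf
  have hmem : chi n * ∑ k ∈ Icc i j, g k ∈ degreeLE n (n - i) := by
    rw [mul_sum]
    refine Submodule.sum_mem _ fun k hk => ?_
    have hk' := mem_Icc.1 hk
    exact level_le_degreeLE (by omega)
      (chi_mul_mem_level (by omega) (inU_two_iff_mem_level.1 (hg k hk)))
  have hne' : chi n * ∑ k ∈ Icc i j, g k ≠ 0 := fun h => hne <| by
    rw [← one_mul (∑ k ∈ Icc i j, g k), ← chi_mul_chi, mul_assoc, h, mul_zero]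
  have hbound := two_pow_le_two_pow_mul_suppCard hmem hne'
  rw [suppCard_chi_mul, ← pow_sub_mul_pow 2 (hij.trans hjn)] at hbound
  exact Nat.le_of_mul_le_mul_left hbound (by positivity)

/-- If `0 ≤ i ≤ j ≤ n`, `i + j > n` and `f` is a nonzero function in `U_{[i,j]}(n,2)`,
then `|Supp(f)| ≥ 2^{i}`. -/
theorem stmt2 (n i j : ℕ) (hn : 1 ≤ n) (hij : i ≤ j) (hjn : j ≤ n) (hsum : n < i + j)
    (f : (Fin n → Fin 2) → ℝ) (hf : inUIJ n 2 i j f) (hne : f ≠ 0) :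
    2 ^ i ≤ suppCard n 2 f :=
  stmt2_general n i j hij hjn f hf hne
end

section
/- Let n ≥ 1 and let 0 ≤ i ≤ j ≤ n with i + j > n. Then there exists a nonzero function f : Σ_2^n → ℝ in U_{[i,j]}(n,2) whose support has cardinality exactly 2^{i}. -/
namespace HammingAux

noncomputable def eps : Fin 2 → ℝ := fun v => if v = 0 then 1 else -1

lemma eps_zero : eps 0 = 1 := rfl
lemma eps_one : eps 1 = -1 := by norm_num [eps]
lemma eps_ne_zero (v : Fin 2) : eps v ≠ 0 := by fin_cases v <;> norm_num [eps]
lemma eps_add_one (v : Fin 2) : eps (v + 1) = - eps v := by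
  fin_cases v
  · norm_num [eps]
  · norm_num [eps, show ((1 : Fin 2) + 1) = 0 from rfl]

lemma fin2_eq_add_one : ∀ a b : Fin 2, a ≠ b → b = a + 1 := by decide
lemma fin2_add_one_ne : ∀ a : Fin 2, a + 1 ≠ a := by decide
lemma fin2_addc : ∀ a b : Fin 2, a + b + b = a := by decide
lemma fin2_add_eq_one : ∀ a b : Fin 2, a + b = 1 → a = b + 1 := by decide
lemma fin2_bplus : ∀ b : Fin 2, (b + 1) + b = 1 := by decide

noncomputable def chi {n : ℕ} (S : Finset (Fin n)) (x : Fin n → Fin 2) : ℝ :=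
  ∏ t ∈ S, eps (x t)

lemma neighbor_set {n : ℕ} (x : Fin n → Fin 2) :
    Finset.univ.filter (fun y : Fin n → Fin 2 => hammingDist x y = 1) =
      Finset.univ.image (fun t : Fin n => Function.update x t (x t + 1)) := by
  ext y
  simp only [Finset.mem_filter, Finset.mem_univ, true_and, Finset.mem_image]
  constructor
  · intro h
    rw [hammingDist, Finset.card_eq_one] at h
    obtain ⟨t, ht⟩ := h
    refine ⟨t, ?_⟩
    funext u
    by_cases hu : u = t
    · subst hu
      have hm : u ∈ Finset.univ.filter fun i => x i ≠ y i := by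
        rw [ht]; exact Finset.mem_singleton_self u
      have hne : x u ≠ y u := (Finset.mem_filter.mp hm).2
      rw [Function.update_self]
      exact (fin2_eq_add_one _ _ hne).symm
    · rw [Function.update_of_ne hu]
      by_contra hne
      have : u ∈ Finset.univ.filter fun i => x i ≠ y i :=
        Finset.mem_filter.mpr ⟨Finset.mem_univ u, hne⟩
      rw [ht, Finset.mem_singleton] at this
      exact hu this
  · rintro ⟨t, rfl⟩
    rw [hammingDist]
    rw [Finset.card_eq_one]
    refine ⟨t, ?_⟩
    ext u
    simp only [Finset.mem_filter, Finset.mem_univ, true_and, Finset.mem_singleton]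
    constructor
    · intro hne
      by_contra hu
      rw [Function.update_of_ne hu] at hne
      exact hne rfl
    · rintro rfl
      rw [Function.update_self]
      exact fun h => fin2_add_one_ne (x u) h.symm

lemma update_inj {n : ℕ} (x : Fin n → Fin 2) {t t' : Fin n}
    (h : Function.update x t (x t + 1) = Function.update x t' (x t' + 1)) : t = t' := by
  by_contra hne
  have := congrFun h t
  rw [Function.update_self, Function.update_of_ne hne] at this
  exact fin2_add_one_ne (x t) this

lemma chi_update {n : ℕ} (S : Finset (Fin n)) (x : Fin n → Fin 2) (t : Fin n) :
    chi S (Function.update x t (x t + 1)) = (if t ∈ S then (-1 : ℝ) else 1) * chi S x := by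
  by_cases ht : t ∈ S
  · rw [if_pos ht, chi, chi, ← Finset.mul_prod_erase _ _ ht, ← Finset.mul_prod_erase _ _ ht,
      Function.update_self, eps_add_one]
    have : ∀ u ∈ S.erase t, eps (Function.update x t (x t + 1) u) = eps (x u) := by
      intro u hu
      rw [Function.update_of_ne (Finset.ne_of_mem_erase hu)]
    rw [Finset.prod_congr rfl this]
    ring
  · rw [if_neg ht, one_mul, chi, chi]
    refine Finset.prod_congr rfl fun u hu => ?_
    have hut : u ≠ t := by rintro rfl; exact ht hu
    rw [Function.update_of_ne hut]

lemma chi_inU {n : ℕ} (S : Finset (Fin n)) : inU n 2 S.card (chi S) := by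
  intro x
  rw [neighbor_set, Finset.sum_image (fun t _ t' _ h => update_inj x h)]
  rw [Finset.sum_congr rfl (fun t _ => chi_update S x t), ← Finset.sum_mul]
  have hsum : ∑ t : Fin n, (if t ∈ S then (-1 : ℝ) else 1) = (n : ℝ) - 2 * S.card := by
    rw [Finset.sum_ite, Finset.sum_const, Finset.sum_const]
    have h1 : Finset.univ.filter (fun t : Fin n => t ∈ S) = S := by
      ext u; simp
    have h2 : Finset.univ.filter (fun t : Fin n => t ∉ S) = Sᶜ := by
      ext u; simp
    rw [h1, h2, Finset.card_compl, Fintype.card_fin]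
    have hle : S.card ≤ n := by
      simpa using Finset.card_le_univ S
    simp only [nsmul_eq_mul, mul_one, mul_neg_one]
    rw [Nat.cast_sub hle]
    ring
  rw [hsum]
  push_cast
  ring


lemma inU_sum {n q k : ℕ} {ι : Type*} {A : Finset ι} {h : ι → (Fin n → Fin q) → ℝ}
    (H : ∀ a ∈ A, inU n q k (h a)) : inU n q k (∑ a ∈ A, h a) := by
  intro x
  simp only [Finset.sum_apply]
  rw [Finset.mul_sum]
  rw [Finset.sum_comm]
  refine Finset.sum_congr rfl fun a ha => ?_
  exact H a ha x

lemma inU_smul {n q k : ℕ} {f : (Fin n → Fin q) → ℝ} (c : ℝ) (hf : inU n q k f) :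
    inU n q k (c • f) := by
  intro x
  simp only [Pi.smul_apply, smul_eq_mul]
  have := hf x
  calc ((n:ℝ) * ((q:ℝ)-1) - (q:ℝ)*(k:ℝ)) * (c * f x)
      = c * (((n:ℝ) * ((q:ℝ)-1) - (q:ℝ)*(k:ℝ)) * f x) := by ring
    _ = c * ∑ y ∈ Finset.univ.filter (fun y : Fin n → Fin q => hammingDist x y = 1), f y := by
        rw [this]
    _ = _ := Finset.mul_sum _ _ _

section Construction

variable (n p r : ℕ)

def Aset : Finset (Fin n) := Finset.univ.filter (fun t => t.1 < 2*p ∧ t.1 % 2 = 0)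
def Bset : Finset (Fin n) := Finset.univ.filter (fun t => t.1 < 2*p ∧ t.1 % 2 = 1)
def Rset : Finset (Fin n) := Finset.univ.filter (fun t => 2*p ≤ t.1 ∧ t.1 < 2*p + r)
def Cset : Finset (Fin n) := Finset.univ.filter (fun t => 2*p + r ≤ t.1)

def sig (t : Fin n) : Fin n := if h : t.1 + 1 < n then ⟨t.1+1, h⟩ else t

variable {n p r}

lemma mem_Aset {t : Fin n} : t ∈ Aset n p ↔ t.1 < 2*p ∧ t.1 % 2 = 0 := by simp [Aset]
lemma mem_Bset {t : Fin n} : t ∈ Bset n p ↔ t.1 < 2*p ∧ t.1 % 2 = 1 := by simp [Bset]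
lemma mem_Rset {t : Fin n} : t ∈ Rset n p r ↔ 2*p ≤ t.1 ∧ t.1 < 2*p + r := by simp [Rset]
lemma mem_Cset {t : Fin n} : t ∈ Cset n p r ↔ 2*p + r ≤ t.1 := by simp [Cset]

lemma sig_val (hp : 2*p ≤ n) {t : Fin n} (ht : t ∈ Aset n p) : (sig n t).1 = t.1 + 1 := by
  rw [mem_Aset] at ht
  have h : t.1 + 1 < n := by omega
  rw [sig, dif_pos h]

lemma card_interval (a b : ℕ) (hb : b ≤ n) :
    (Finset.univ.filter (fun t : Fin n => a ≤ t.1 ∧ t.1 < b)).card = b - a := by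
  have key : (Finset.univ.filter (fun t : Fin n => a ≤ t.1 ∧ t.1 < b)).card
      = (Finset.range (b - a)).card := by
    refine Finset.card_bij' (fun t _ => t.1 - a)
      (fun m hm => ⟨a + m, by rw [Finset.mem_range] at hm; omega⟩) ?_ ?_ ?_ ?_
    · intro t ht
      rw [Finset.mem_filter] at ht
      rw [Finset.mem_range]
      first
      | omega
      | (simp only [Fin.val_mk]; omega)
    · intro m hm
      rw [Finset.mem_range] at hm
      simp only [Finset.mem_filter, Finset.mem_univ, true_and]
      first
      | omega
      | (simp only [Fin.val_mk]; omega)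
    · intro t ht
      rw [Finset.mem_filter] at ht
      apply Fin.ext
      first
      | omega
      | (simp only [Fin.val_mk]; omega)
    · intro m hm
      rw [Finset.mem_range] at hm
      first
      | omega
      | (simp only [Fin.val_mk]; omega)
  rw [key, Finset.card_range]

lemma card_parity (e : ℕ) (hp : 2*p ≤ n) (he : e < 2) :
    (Finset.univ.filter (fun t : Fin n => t.1 < 2*p ∧ t.1 % 2 = e)).card = p := by
  have key : (Finset.univ.filter (fun t : Fin n => t.1 < 2*p ∧ t.1 % 2 = e)).card
      = (Finset.range p).card := by
    refine Finset.card_bij' (fun t _ => t.1 / 2)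
      (fun m hm => ⟨2*m + e, by rw [Finset.mem_range] at hm; omega⟩) ?_ ?_ ?_ ?_
    · intro t ht
      rw [Finset.mem_filter] at ht
      rw [Finset.mem_range]
      first
      | omega
      | (simp only [Fin.val_mk]; omega)
    · intro m hm
      rw [Finset.mem_range] at hm
      simp only [Finset.mem_filter, Finset.mem_univ, true_and]
      first
      | omega
      | (simp only [Fin.val_mk]; omega)
    · intro t ht
      rw [Finset.mem_filter] at ht
      apply Fin.ext
      first
      | omega
      | (simp only [Fin.val_mk]; omega)
    · intro m hm
      rw [Finset.mem_range] at hm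
      first
      | omega
      | (simp only [Fin.val_mk]; omega)
  rw [key, Finset.card_range]

lemma card_Aset (hp : 2*p ≤ n) : (Aset n p).card = p := card_parity 0 hp (by norm_num)
lemma card_Rset (hpr : 2*p + r ≤ n) : (Rset n p r).card = r := by
  have := card_interval (n := n) (2*p) (2*p + r) hpr
  rw [Rset]
  omega
lemma card_Cset : (Cset n p r).card = n - (2*p + r) := by
  have h : Cset n p r = Finset.univ.filter (fun t : Fin n => 2*p + r ≤ t.1 ∧ t.1 < n) := by
    ext t; simp [Cset, t.isLt]
  rw [h, card_interval _ _ le_rfl]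


variable (n p r)

def Sof (T : Finset (Fin n)) : Finset (Fin n) :=
  (((T ∩ Aset n p).image (sig n) ∪ (Aset n p \ T)) ∪ (T ∩ Rset n p r)) ∪ Cset n p r

noncomputable def FF (x : Fin n → Fin 2) : ℝ :=
  (∏ t ∈ Aset n p, (eps (x t) - eps (x (sig n t)))) *
    (∏ t ∈ Rset n p r, (1 + eps (x t))) * (∏ t ∈ Cset n p r, eps (x t))

variable {n p r}

lemma disj_AR : Disjoint (Aset n p) (Rset n p r) := by
  rw [Finset.disjoint_left]
  intro a ha hb
  rw [mem_Aset] at ha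
  rw [mem_Rset] at hb
  omega

lemma mem_img (hp : 2*p ≤ n) {T : Finset (Fin n)} {u : Fin n}
    (hu : u ∈ (T ∩ Aset n p).image (sig n)) : u.1 < 2*p ∧ u.1 % 2 = 1 := by
  rw [Finset.mem_image] at hu
  obtain ⟨t, ht, rfl⟩ := hu
  have htA : t ∈ Aset n p := (Finset.mem_inter.mp ht).2
  have hv := sig_val hp htA
  rw [mem_Aset] at htA
  omega

lemma d12 (hp : 2*p ≤ n) (T : Finset (Fin n)) :
    Disjoint ((T ∩ Aset n p).image (sig n)) (Aset n p \ T) := by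
  rw [Finset.disjoint_left]
  intro u hu hv
  have h1 := mem_img hp hu
  have h2 := (Finset.mem_sdiff.mp hv).1
  rw [mem_Aset] at h2
  omega

lemma d3 (hp : 2*p ≤ n) (T : Finset (Fin n)) :
    Disjoint ((T ∩ Aset n p).image (sig n) ∪ (Aset n p \ T)) (T ∩ Rset n p r) := by
  rw [Finset.disjoint_left]
  intro u hu hv
  have h2 : 2*p ≤ u.1 := by
    have := (Finset.mem_inter.mp hv).2
    rw [mem_Rset] at this
    omega
  rcases Finset.mem_union.mp hu with h | h
  · exact absurd (mem_img hp h).1 (by omega)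
  · have := (Finset.mem_sdiff.mp h).1
    rw [mem_Aset] at this
    omega

lemma d4 (hp : 2*p ≤ n) (T : Finset (Fin n)) :
    Disjoint (((T ∩ Aset n p).image (sig n) ∪ (Aset n p \ T)) ∪ (T ∩ Rset n p r))
      (Cset n p r) := by
  rw [Finset.disjoint_left]
  intro u hu hv
  rw [mem_Cset] at hv
  rcases Finset.mem_union.mp hu with h | h
  · rcases Finset.mem_union.mp h with h' | h'
    · exact absurd (mem_img hp h').1 (by omega)
    · have := (Finset.mem_sdiff.mp h').1
      rw [mem_Aset] at this
      omega
  · have := (Finset.mem_inter.mp h).2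
    rw [mem_Rset] at this
    omega

lemma sig_inj (hp : 2*p ≤ n) (T : Finset (Fin n)) :
    ∀ t ∈ T ∩ Aset n p, ∀ t' ∈ T ∩ Aset n p, sig n t = sig n t' → t = t' := by
  intro t ht t' ht' h
  have h1 := sig_val hp (Finset.mem_inter.mp ht).2
  have h2 := sig_val hp (Finset.mem_inter.mp ht').2
  apply Fin.ext
  have := congrArg Fin.val h
  omega

lemma Sof_card (hp : 2*p ≤ n) (T : Finset (Fin n)) :
    (Sof n p r T).card = p + (T ∩ Rset n p r).card + (Cset n p r).card := by
  rw [Sof, Finset.card_union_of_disjoint (d4 hp T), Finset.card_union_of_disjoint (d3 hp T),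
    Finset.card_union_of_disjoint (d12 hp T),
    Finset.card_image_of_injOn (fun a ha b hb h => sig_inj hp T a ha b hb h)]
  have key := Finset.card_inter_add_card_sdiff (Aset n p) T
  rw [card_Aset hp] at key
  rw [Finset.inter_comm]
  omega

lemma chi_union {S S' : Finset (Fin n)} (h : Disjoint S S') (x : Fin n → Fin 2) :
    chi (S ∪ S') x = chi S x * chi S' x := Finset.prod_union h

lemma FF_eq_sum (hp : 2*p ≤ n) (x : Fin n → Fin 2) :
    FF n p r x = ∑ T ∈ (Aset n p ∪ Rset n p r).powerset,
      (-1 : ℝ) ^ (T ∩ Aset n p).card * chi (Sof n p r T) x := by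
  classical
  have main : (∏ t ∈ Aset n p, (eps (x t) - eps (x (sig n t)))) *
        (∏ t ∈ Rset n p r, (1 + eps (x t)))
      = ∑ T ∈ (Aset n p ∪ Rset n p r).powerset,
          (∏ t ∈ T, (if t.1 < 2*p then -eps (x (sig n t)) else eps (x t))) *
          ∏ t ∈ (Aset n p ∪ Rset n p r) \ T, (if t.1 < 2*p then eps (x t) else 1) := by
    rw [← Finset.prod_add, Finset.prod_union disj_AR]
    congr 1
    · refine Finset.prod_congr rfl fun t ht => ?_
      rw [mem_Aset] at ht
      rw [if_pos ht.1, if_pos ht.1]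
      ring
    · refine Finset.prod_congr rfl fun t ht => ?_
      rw [mem_Rset] at ht
      rw [if_neg (by omega), if_neg (by omega)]
      ring
  rw [FF, main, Finset.sum_mul]
  refine Finset.sum_congr rfl fun T hT => ?_
  rw [Finset.mem_powerset] at hT
  have hTsplit : T = (T ∩ Aset n p) ∪ (T ∩ Rset n p r) := by
    rw [← Finset.inter_union_distrib_left, Finset.inter_eq_left.mpr hT]
  have hdTA : Disjoint (T ∩ Aset n p) (T ∩ Rset n p r) :=
    disj_AR.mono Finset.inter_subset_right Finset.inter_subset_right
  have h1 : (∏ t ∈ T, (if t.1 < 2*p then -eps (x (sig n t)) else eps (x t)))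
      = (-1 : ℝ) ^ (T ∩ Aset n p).card *
          (chi ((T ∩ Aset n p).image (sig n)) x * chi (T ∩ Rset n p r) x) := by
    conv_lhs => rw [hTsplit]
    rw [Finset.prod_union hdTA]
    have ha : ∏ t ∈ T ∩ Aset n p, (if t.1 < 2*p then -eps (x (sig n t)) else eps (x t))
        = ∏ t ∈ T ∩ Aset n p, (-1 : ℝ) * eps (x (sig n t)) := by
      refine Finset.prod_congr rfl fun t ht => ?_
      have := (Finset.mem_inter.mp ht).2
      rw [mem_Aset] at this
      rw [if_pos this.1, neg_one_mul]
    have hb : ∏ t ∈ T ∩ Rset n p r, (if t.1 < 2*p then -eps (x (sig n t)) else eps (x t))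
        = chi (T ∩ Rset n p r) x := by
      refine Finset.prod_congr rfl fun t ht => ?_
      have := (Finset.mem_inter.mp ht).2
      rw [mem_Rset] at this
      rw [if_neg (by omega)]
    rw [ha, hb, Finset.prod_mul_distrib, Finset.prod_const]
    have hc : chi ((T ∩ Aset n p).image (sig n)) x = ∏ t ∈ T ∩ Aset n p, eps (x (sig n t)) := by
      rw [chi]
      exact Finset.prod_image (sig_inj hp T)
    rw [hc]
    ring
  have h2 : (∏ t ∈ (Aset n p ∪ Rset n p r) \ T, (if t.1 < 2*p then eps (x t) else 1))
      = chi (Aset n p \ T) x := by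
    rw [Finset.union_sdiff_distrib,
      Finset.prod_union (disj_AR.mono Finset.sdiff_subset Finset.sdiff_subset)]
    have ha : ∏ t ∈ Aset n p \ T, (if t.1 < 2*p then eps (x t) else 1) = chi (Aset n p \ T) x := by
      refine Finset.prod_congr rfl fun t ht => ?_
      have := (Finset.mem_sdiff.mp ht).1
      rw [mem_Aset] at this
      rw [if_pos this.1]
    have hb : ∏ t ∈ Rset n p r \ T, (if t.1 < 2*p then eps (x t) else 1) = 1 := by
      refine Finset.prod_eq_one fun t ht => ?_
      have := (Finset.mem_sdiff.mp ht).1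
      rw [mem_Rset] at this
      rw [if_neg (by omega)]
    rw [ha, hb, mul_one]
  have h3 : chi (Sof n p r T) x
      = chi ((T ∩ Aset n p).image (sig n)) x * chi (Aset n p \ T) x *
          chi (T ∩ Rset n p r) x * chi (Cset n p r) x := by
    rw [Sof, chi_union (d4 hp T), chi_union (d3 hp T), chi_union (d12 hp T)]
  have hC : (∏ t ∈ Cset n p r, eps (x t)) = chi (Cset n p r) x := rfl
  rw [h1, h2, h3, hC]
  ring


lemma eps_sub_eq_zero_iff (a b : Fin 2) : eps a - eps b = 0 ↔ a = b := by
  fin_cases a <;> fin_cases b <;> norm_num [eps_zero, eps_one]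

lemma one_add_eps_eq_zero_iff (a : Fin 2) : 1 + eps a = 0 ↔ a = 1 := by
  fin_cases a <;> norm_num [eps_zero, eps_one]

lemma fin2_ne_one : ∀ a : Fin 2, a ≠ 1 ↔ a = 0 := by decide

lemma FF_ne_zero_iff (hp : 2*p ≤ n) (x : Fin n → Fin 2) :
    FF n p r x ≠ 0 ↔
      (∀ t ∈ Aset n p, x (sig n t) = x t + 1) ∧ (∀ t ∈ Rset n p r, x t = 0) := by
  rw [FF, mul_ne_zero_iff, mul_ne_zero_iff]
  have hC : (∏ t ∈ Cset n p r, eps (x t)) ≠ 0 :=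
    Finset.prod_ne_zero_iff.mpr fun t _ => eps_ne_zero _
  constructor
  · rintro ⟨⟨hA, hR⟩, -⟩
    constructor
    · intro t ht
      have := Finset.prod_ne_zero_iff.mp hA t ht
      have hne : x t ≠ x (sig n t) := fun h => this (by rw [h, sub_self])
      exact (fin2_eq_add_one _ _ hne)
    · intro t ht
      have := Finset.prod_ne_zero_iff.mp hR t ht
      have hne : x t ≠ 1 := fun h => this (by rw [h, (one_add_eps_eq_zero_iff 1).mpr rfl])
      exact (fin2_ne_one _).mp hne
  · rintro ⟨hA, hR⟩
    refine ⟨⟨?_, ?_⟩, hC⟩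
    · refine Finset.prod_ne_zero_iff.mpr fun t ht => ?_
      intro h
      rw [eps_sub_eq_zero_iff] at h
      have := hA t ht
      rw [← h] at this
      exact fin2_add_one_ne (x t) this.symm
    · refine Finset.prod_ne_zero_iff.mpr fun t ht => ?_
      intro h
      rw [one_add_eps_eq_zero_iff] at h
      rw [hR t ht] at h
      exact absurd h (by decide)

variable (n p r)

def prevf (t : Fin n) : Fin n := ⟨t.1 - 1, lt_of_le_of_lt (Nat.sub_le _ _) t.isLt⟩

def Psi (x : Fin n → Fin 2) : Fin n → Fin 2 := fun t =>
  if t.1 < 2*p ∧ t.1 % 2 = 1 then x t + x (prevf n t) else x t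

def allowed (t : Fin n) : Finset (Fin 2) :=
  if t.1 < 2*p ∧ t.1 % 2 = 1 then {1}
  else if 2*p ≤ t.1 ∧ t.1 < 2*p + r then {0} else Finset.univ

variable {n p r}

lemma prevf_val (t : Fin n) : (prevf n t).1 = t.1 - 1 := rfl

lemma Psi_invol : Function.Involutive (Psi n p) := by
  intro x
  funext t
  by_cases h : t.1 < 2*p ∧ t.1 % 2 = 1
  · have hprev : ¬((prevf n t).1 < 2*p ∧ (prevf n t).1 % 2 = 1) := by
      rw [prevf_val]
      omega
    show Psi n p (Psi n p x) t = x t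
    rw [Psi]
    simp only [if_pos h]
    rw [Psi]
    simp only [if_pos h]
    rw [Psi]
    simp only [if_neg hprev]
    exact fin2_addc _ _
  · show Psi n p (Psi n p x) t = x t
    rw [Psi]
    simp only [if_neg h]
    rw [Psi]
    simp only [if_neg h]

lemma prev_mem {u : Fin n} (hu : u.1 < 2*p ∧ u.1 % 2 = 1) : prevf n u ∈ Aset n p := by
  rw [mem_Aset, prevf_val]
  omega

lemma sig_prev (hp : 2*p ≤ n) {u : Fin n} (hu : u.1 < 2*p ∧ u.1 % 2 = 1) :
    sig n (prevf n u) = u := by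
  have := sig_val hp (prev_mem hu)
  apply Fin.ext
  rw [this, prevf_val]
  omega

lemma prev_sig (hp : 2*p ≤ n) {t : Fin n} (ht : t ∈ Aset n p) :
    prevf n (sig n t) = t := by
  apply Fin.ext
  rw [prevf_val, sig_val hp ht]
  omega

lemma sig_pairB (hp : 2*p ≤ n) {t : Fin n} (ht : t ∈ Aset n p) :
    (sig n t).1 < 2*p ∧ (sig n t).1 % 2 = 1 := by
  have := sig_val hp ht
  rw [mem_Aset] at ht
  omega

lemma cond_iff (hp : 2*p ≤ n) (x : Fin n → Fin 2) :
    FF n p r x ≠ 0 ↔ ∀ t, Psi n p x t ∈ allowed n p r t := by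
  rw [FF_ne_zero_iff hp]
  constructor
  · rintro ⟨hA, hR⟩ t
    rw [allowed]
    by_cases h1 : t.1 < 2*p ∧ t.1 % 2 = 1
    · rw [if_pos h1, Finset.mem_singleton, Psi, if_pos h1]
      have hmem := prev_mem h1
      have h2 := hA _ hmem
      rw [sig_prev hp h1] at h2
      rw [h2]
      exact fin2_bplus _
    · rw [if_neg h1]
      by_cases h2 : 2*p ≤ t.1 ∧ t.1 < 2*p + r
      · rw [if_pos h2, Finset.mem_singleton, Psi, if_neg h1]
        exact hR t (mem_Rset.mpr h2)
      · rw [if_neg h2]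
        exact Finset.mem_univ _
  · intro h
    constructor
    · intro t ht
      have hs := sig_pairB hp ht
      have := h (sig n t)
      rw [allowed, if_pos hs, Finset.mem_singleton, Psi, if_pos hs, prev_sig hp ht] at this
      exact fin2_add_eq_one _ _ this
    · intro t ht
      rw [mem_Rset] at ht
      have h1 : ¬(t.1 < 2*p ∧ t.1 % 2 = 1) := by omega
      have := h t
      rw [allowed, if_neg h1, if_pos ht, Finset.mem_singleton, Psi, if_neg h1] at this
      exact this

lemma supp_eq (hp : 2*p ≤ n) :
    Finset.univ.filter (fun x : Fin n → Fin 2 => FF n p r x ≠ 0)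
      = (Fintype.piFinset (allowed n p r)).image (Psi n p) := by
  ext x
  simp only [Finset.mem_filter, Finset.mem_univ, true_and, Finset.mem_image]
  rw [cond_iff hp]
  constructor
  · intro h
    exact ⟨Psi n p x, Fintype.mem_piFinset.mpr h, Psi_invol x⟩
  · rintro ⟨y, hy, rfl⟩
    intro t
    rw [Psi_invol y]
    exact Fintype.mem_piFinset.mp hy t

lemma disj_AC : Disjoint (Aset n p) (Cset n p r) := by
  rw [Finset.disjoint_left]
  intro a ha hb
  rw [mem_Aset] at ha
  rw [mem_Cset] at hb
  omega

lemma card_supp (hp : 2*p ≤ n) :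
    (Finset.univ.filter (fun x : Fin n → Fin 2 => FF n p r x ≠ 0)).card
      = 2 ^ (p + (n - (2*p + r))) := by
  rw [supp_eq hp, Finset.card_image_of_injective _ (Psi_invol (n := n) (p := p)).injective,
    Fintype.card_piFinset]
  have hcard : ∀ t : Fin n, (allowed n p r t).card =
      if (t.1 < 2*p ∧ t.1 % 2 = 1) ∨ (2*p ≤ t.1 ∧ t.1 < 2*p + r) then 1 else 2 := by
    intro t
    by_cases h1 : t.1 < 2*p ∧ t.1 % 2 = 1
    · rw [allowed, if_pos h1, if_pos (Or.inl h1), Finset.card_singleton]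
    · by_cases h2 : 2*p ≤ t.1 ∧ t.1 < 2*p + r
      · rw [allowed, if_neg h1, if_pos h2, if_pos (Or.inr h2), Finset.card_singleton]
      · rw [allowed, if_neg h1, if_neg h2, if_neg (by tauto), Finset.card_univ,
          Fintype.card_fin]
  rw [Finset.prod_congr rfl (fun t _ => hcard t), Finset.prod_ite, Finset.prod_const,
    Finset.prod_const, one_pow, one_mul]
  congr 1
  have heq : Finset.univ.filter
      (fun t : Fin n => ¬((t.1 < 2*p ∧ t.1 % 2 = 1) ∨ (2*p ≤ t.1 ∧ t.1 < 2*p + r)))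
      = Aset n p ∪ Cset n p r := by
    ext t
    simp only [Finset.mem_filter, Finset.mem_univ, true_and, Finset.mem_union, mem_Aset,
      mem_Cset]
    omega
  rw [heq, Finset.card_union_of_disjoint disj_AC, card_Aset hp, card_Cset]

lemma FF_x0_ne (hp : 2*p ≤ n) :
    FF n p r (fun t : Fin n => if t.1 % 2 = 1 ∧ t.1 < 2*p then 1 else 0) ≠ 0 := by
  rw [FF_ne_zero_iff hp]
  constructor
  · intro t ht
    have hs := sig_pairB hp ht
    have htA := ht
    rw [mem_Aset] at htA
    show (if (sig n t).1 % 2 = 1 ∧ (sig n t).1 < 2*p then (1 : Fin 2) else 0)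
        = (if t.1 % 2 = 1 ∧ t.1 < 2*p then (1 : Fin 2) else 0) + 1
    rw [if_pos ⟨hs.2, hs.1⟩, if_neg (by omega)]
    rfl
  · intro t ht
    rw [mem_Rset] at ht
    show (if t.1 % 2 = 1 ∧ t.1 < 2*p then (1 : Fin 2) else 0) = 0
    rw [if_neg (by omega)]

end Construction

end HammingAux

open HammingAux

/-- If `0 ≤ i ≤ j ≤ n` and `i + j > n`, then there is a nonzero function in
`U_{[i,j]}(n,2)` whose support has cardinality exactly `2^{i}`. -/
theorem stmt3 (n i j : ℕ) (hn : 1 ≤ n) (hij : i ≤ j) (hjn : j ≤ n) (hsum : n < i + j) :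
    ∃ f : (Fin n → Fin 2) → ℝ, inUIJ n 2 i j f ∧ f ≠ 0 ∧ suppCard n 2 f = 2 ^ i := by
  classical
  set p := n - j with hpdef
  set r := j - i with hrdef
  have hp : 2*p ≤ n := by omega
  have hpr : 2*p + r ≤ n := by omega
  have hmaps : ∀ T ∈ (Aset n p ∪ Rset n p r).powerset,
      (Sof n p r T).card ∈ Finset.Icc i j := by
    intro T _
    rw [Finset.mem_Icc, Sof_card hp, card_Cset]
    have hle : (T ∩ Rset n p r).card ≤ r := by
      have h := Finset.card_le_card (Finset.inter_subset_right (s₁ := T) (s₂ := Rset n p r))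
      rw [card_Rset hpr] at h
      exact h
    omega
  refine ⟨FF n p r, ⟨fun k => ∑ T ∈ (Aset n p ∪ Rset n p r).powerset.filter
      (fun T => (Sof n p r T).card = k), ((-1:ℝ) ^ (T ∩ Aset n p).card) • chi (Sof n p r T),
      ?_, ?_⟩, ?_, ?_⟩
  · intro k _
    apply inU_sum
    intro T hT
    rw [Finset.mem_filter] at hT
    have h := chi_inU (Sof n p r T)
    rw [hT.2] at h
    exact inU_smul _ h
  · funext x
    rw [FF_eq_sum hp x]
    simp only [Finset.sum_apply, Pi.smul_apply, smul_eq_mul]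
    exact (Finset.sum_fiberwise_of_maps_to hmaps
      (fun T => (-1:ℝ) ^ (T ∩ Aset n p).card * chi (Sof n p r T) x)).symm
  · intro h0
    have h := FF_x0_ne (n := n) (p := p) (r := r) hp
    rw [h0] at h
    exact h rfl
  · unfold suppCard
    rw [card_supp hp]
    congr 1
    omega
end

section
/- Let n ≥ 1 and let 0 ≤ i ≤ j ≤ n with i + j > n and i + 2j ≤ 2n (equivalently i/2 + j ≤ n). Then there exists a nonzero function f : Σ_3^n → ℝ in U_{[i,j]}(n,3) whose support has cardinality exactly 2^{3(n−j)−i} · 3^{i+j−n}. -/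
/-!
Eigenfunctions of Hamming graphs multiply: if `F ∈ U_k(m,q)` and `G ∈ U_l(n,q)`, then
`(a, b) ↦ F a * G b` lies in `U_{k+l}(m+n,q)`, because a neighbour of `(a, b)` changes exactly one
of the two blocks and the eigenvalues `λ_k(m,q)` are additive in `(m, k)`. Hence tensor products
send `U_{[i,j]}(m,q) × U_{[k,l]}(n,q)` to `U_{[i+k,j+l]}(m+n,q)` and multiply support sizes.
Three small blocks over `Σ_3` suffice: a function in `U_2(3,3)` with support 6, one in `U_1(2,3)`
with support 4, and the indicator of a point of `Σ_3`, which lies in `U_0(1,3) ⊕ U_1(1,3)`.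
Taking `A = i+j-n`, `P = 2n-i-2j` and `j-i` copies of them gives parameters `(n, i, j)` and
support `6^A · 4^P = 2^{3(n-j)-i} · 3^{i+j-n}`.
-/

open Finset

theorem hammingDist_append {α : Type*} [DecidableEq α] {m n : ℕ} (a a' : Fin m → α)
    (b b' : Fin n → α) :
    hammingDist (Fin.append a b) (Fin.append a' b') = hammingDist a a' + hammingDist b b' := by
  unfold hammingDist
  simp only [card_filter, Fin.sum_univ_add, Fin.append_left, Fin.append_right]

section Tensor

variable {q m n : ℕ}

def tensor (F : (Fin m → Fin q) → ℝ) (G : (Fin n → Fin q) → ℝ) :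
    (Fin (m + n) → Fin q) → ℝ :=
  fun x => F (fun s => x (Fin.castAdd n s)) * G (fun s => x (Fin.natAdd m s))

@[simp]
theorem tensor_append (F : (Fin m → Fin q) → ℝ) (G : (Fin n → Fin q) → ℝ)
    (a : Fin m → Fin q) (b : Fin n → Fin q) : tensor F G (Fin.append a b) = F a * G b := by
  simp [tensor]

theorem filter_hammingDist_append_eq_one (a : Fin m → Fin q) (b : Fin n → Fin q) :
    univ.filter (fun p : (Fin m → Fin q) × (Fin n → Fin q) =>
        hammingDist a p.1 + hammingDist b p.2 = 1) =
      univ.filter (fun a' => hammingDist a a' = 1) ×ˢ {b} ∪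
        {a} ×ˢ univ.filter (fun b' => hammingDist b b' = 1) := by
  ext ⟨a', b'⟩
  simp only [mem_filter, mem_univ, true_and, mem_union, mem_product, mem_singleton]
  constructor
  · intro h
    rcases Nat.add_eq_one_iff.1 h with ⟨h0, h1⟩ | ⟨h1, h0⟩
    · exact Or.inr ⟨(hammingDist_eq_zero.1 h0).symm, h1⟩
    · exact Or.inl ⟨h1, (hammingDist_eq_zero.1 h0).symm⟩
  · rintro (⟨h1, rfl⟩ | ⟨rfl, h1⟩) <;> simp [h1]

theorem sum_hammingNeighbors_tensor (F : (Fin m → Fin q) → ℝ) (G : (Fin n → Fin q) → ℝ)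
    (a : Fin m → Fin q) (b : Fin n → Fin q) :
    ∑ y ∈ univ.filter (fun y => hammingDist (Fin.append a b) y = 1), tensor F G y =
      (∑ a' ∈ univ.filter (fun a' => hammingDist a a' = 1), F a') * G b +
        F a * ∑ b' ∈ univ.filter (fun b' => hammingDist b b' = 1), G b' := by
  rw [← sum_equiv (Fin.appendEquiv m n)
      (s := univ.filter fun p => hammingDist a p.1 + hammingDist b p.2 = 1)
      (f := fun p => F p.1 * G p.2) (by simp [Fin.appendEquiv, hammingDist_append])
      (by simp [Fin.appendEquiv]),
    filter_hammingDist_append_eq_one, sum_union, sum_product, sum_product]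
  · simp [sum_mul, mul_sum]
  · simp only [disjoint_left, mem_product, mem_filter, mem_singleton]
    rintro ⟨a', b'⟩ ⟨⟨-, h⟩, rfl⟩ ⟨rfl, -⟩
    simp at h

theorem inU_tensor {k l : ℕ} {F : (Fin m → Fin q) → ℝ} {G : (Fin n → Fin q) → ℝ}
    (hF : inU m q k F) (hG : inU n q l G) : inU (m + n) q (k + l) (tensor F G) := by
  intro x
  rw [← Fin.append_castAdd_natAdd (f := x), sum_hammingNeighbors_tensor, ← hF, ← hG,
    tensor_append]
  push_cast
  ring

theorem suppCard_tensor (F : (Fin m → Fin q) → ℝ) (G : (Fin n → Fin q) → ℝ) :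
    suppCard (m + n) q (tensor F G) = suppCard m q F * suppCard n q G := by
  rw [suppCard, suppCard, suppCard, ← card_product, ← filter_product,
    card_equiv (Fin.appendEquiv m n).symm]
  intro x
  obtain ⟨⟨a, b⟩, rfl⟩ := (Fin.appendEquiv m n).surjective x
  simp [Fin.appendEquiv]

end Tensor

def eigenspaceU (n q k : ℕ) : Submodule ℝ ((Fin n → Fin q) → ℝ) where
  carrier := {f | inU n q k f}
  add_mem' {f g} hf hg x := by simp [sum_add_distrib, mul_add, hf x, hg x]
  zero_mem' x := by simp
  smul_mem' c f hf x := by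
    simp only [Pi.smul_apply, smul_eq_mul, ← mul_sum, ← hf x]
    ring

theorem tensor_sum_sum {q m n : ℕ} {ι κ : Type*} (s : Finset ι) (t : Finset κ)
    (g : ι → (Fin m → Fin q) → ℝ) (h : κ → (Fin n → Fin q) → ℝ) :
    tensor (∑ a ∈ s, g a) (∑ b ∈ t, h b) = ∑ p ∈ s ×ˢ t, tensor (g p.1) (h p.2) := by
  funext x
  simp only [sum_product, Finset.sum_apply, tensor, sum_mul_sum]

theorem inUIJ_tensor {q m n i j k l : ℕ} {F : (Fin m → Fin q) → ℝ}
    {G : (Fin n → Fin q) → ℝ} (hF : inUIJ m q i j F) (hG : inUIJ n q k l G) :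
    inUIJ (m + n) q (i + k) (j + l) (tensor F G) := by
  obtain ⟨g, hg, rfl⟩ := hF
  obtain ⟨h, hh, rfl⟩ := hG
  refine ⟨fun c => ∑ p ∈ Icc i j ×ˢ Icc k l with p.1 + p.2 = c, tensor (g p.1) (h p.2),
    fun c _ => Submodule.sum_mem (eigenspaceU _ _ c) fun p hp => ?_, ?_⟩
  · obtain ⟨hmem, rfl⟩ := mem_filter.1 hp
    rw [mem_product] at hmem
    exact inU_tensor (hg _ hmem.1) (hh _ hmem.2)
  · rw [tensor_sum_sum, sum_fiberwise_of_maps_to]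
    simp only [mem_product, mem_Icc]
    omega

def IsSupportCard (n q i j S : ℕ) : Prop :=
  ∃ f : (Fin n → Fin q) → ℝ, inUIJ n q i j f ∧ suppCard n q f = S

namespace IsSupportCard

theorem tensor {q m n i j k l S T : ℕ} (hS : IsSupportCard m q i j S)
    (hT : IsSupportCard n q k l T) : IsSupportCard (m + n) q (i + k) (j + l) (S * T) := by
  obtain ⟨F, hF, rfl⟩ := hS
  obtain ⟨G, hG, rfl⟩ := hT
  exact ⟨_root_.tensor F G, inUIJ_tensor hF hG, suppCard_tensor F G⟩

theorem zero (q : ℕ) : IsSupportCard 0 q 0 0 1 := by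
  refine ⟨fun _ => 1, ⟨fun _ _ => 1, fun k hk x => ?_, by simp⟩, by simp [suppCard]⟩
  simp_all [hammingDist_eq_zero.2 (Subsingleton.elim _ _)]

theorem pow {q n i j S : ℕ} (h : IsSupportCard n q i j S) :
    ∀ A : ℕ, IsSupportCard (A * n) q (A * i) (A * j) (S ^ A)
  | 0 => by simpa using zero q
  | A + 1 => by simpa [add_mul, pow_succ] using (h.pow A).tensor h

end IsSupportCard

theorem inU_intCast {n q k : ℕ} (f : (Fin n → Fin q) → ℤ)
    (hf : ∀ x, ((n : ℤ) * ((q : ℤ) - 1) - (q : ℤ) * (k : ℤ)) * f x =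
      ∑ y ∈ univ.filter (fun y => hammingDist x y = 1), f y) :
    inU n q k (fun x => (f x : ℝ)) := fun x => by
  simpa using congrArg (Int.cast : ℤ → ℝ) (hf x)

theorem suppCard_intCast {n q : ℕ} (f : (Fin n → Fin q) → ℤ) :
    suppCard n q (fun x => (f x : ℝ)) = #{x | f x ≠ 0} := by
  simp [suppCard]

theorem IsSupportCard.of_intCast {n q k S : ℕ} (f : (Fin n → Fin q) → ℤ)
    (hf : ∀ x, ((n : ℤ) * ((q : ℤ) - 1) - (q : ℤ) * (k : ℤ)) * f x =
      ∑ y ∈ univ.filter (fun y => hammingDist x y = 1), f y)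
    (hS : #{x | f x ≠ 0} = S) : IsSupportCard n q k k S := by
  refine ⟨fun x => f x, ⟨fun _ x => f x, fun k' hk' => ?_, by simp⟩,
    (suppCard_intCast f).trans hS⟩
  rw [Icc_self, mem_singleton] at hk'
  exact hk' ▸ inU_intCast f hf

def ternaryX : (Fin 2 → Fin 3) → ℤ := fun x =>
  if x 1 = 0 ∧ x 0 ≠ 1 then 1 else if x 0 = 1 ∧ x 1 ≠ 0 then -1 else 0

def ternaryY : (Fin 3 → Fin 3) → ℤ := fun x =>
  if x 0 = x 1 ∧ x 1 = x 2 then 1 else if x 0 = x 2 + 1 ∧ x 1 = x 2 + 2 then -1 else 0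

set_option maxRecDepth 100000 in
theorem isSupportCard_ternaryX : IsSupportCard 2 3 1 1 4 :=
  .of_intCast ternaryX (by decide) (by decide)

set_option maxRecDepth 100000 in
theorem isSupportCard_ternaryY : IsSupportCard 3 3 2 2 6 :=
  .of_intCast ternaryY (by decide) (by decide)

-- `1 + ternaryU1` is three times the indicator of the point `0`, split into its `U_0` and `U_1`
-- components.
def ternaryU1 : (Fin 1 → Fin 3) → ℤ := fun x => if x 0 = 0 then 2 else -1

set_option maxRecDepth 100000 in
theorem isSupportCard_pointIndicator : IsSupportCard 1 3 0 1 1 := by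
  refine ⟨fun x => ((1 + ternaryU1 x : ℤ) : ℝ),
    ⟨fun k x => ((if k = 0 then 1 else ternaryU1 x : ℤ) : ℝ), fun k hk => ?_, ?_⟩,
    (suppCard_intCast _).trans (by decide)⟩
  · obtain rfl | rfl : k = 0 ∨ k = 1 := by rw [mem_Icc] at hk; omega
    · exact inU_intCast _ (by decide)
    · exact inU_intCast _ (by decide)
  · funext x
    rw [Finset.sum_apply, show Icc 0 1 = {0, 1} by decide, sum_pair zero_ne_one]
    simp

theorem stmt5_general (n i j : ℕ) (hij : i ≤ j) (hsum : n < i + j)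
    (hsum2 : i + 2 * j ≤ 2 * n) :
    ∃ f : (Fin n → Fin 3) → ℝ, inUIJ n 3 i j f ∧ f ≠ 0 ∧
      suppCard n 3 f = 2 ^ (3 * (n - j) - i) * 3 ^ (i + j - n) := by
  set A := i + j - n
  set P := 2 * n - (i + 2 * j)
  have key := ((isSupportCard_ternaryY.pow A).tensor (isSupportCard_ternaryX.pow P)).tensor
    (isSupportCard_pointIndicator.pow (j - i))
  have hS : 6 ^ A * 4 ^ P * 1 ^ (j - i) = 2 ^ (3 * (n - j) - i) * 3 ^ (i + j - n) := by
    rw [show 3 * (n - j) - i = A + 2 * P by omega, pow_add, pow_mul, one_pow, mul_one,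
      show (6 : ℕ) = 2 * 3 by rfl, mul_pow]
    ring
  rw [hS, show A * 3 + P * 2 + (j - i) * 1 = n by omega,
    show A * 2 + P * 1 + (j - i) * 0 = i by omega, show A * 2 + P * 1 + (j - i) * 1 = j by omega]
    at key
  obtain ⟨f, hf, hcard⟩ := key
  refine ⟨f, hf, ?_, hcard⟩
  rintro rfl
  simp [suppCard] at hcard

/-- If `0 ≤ i ≤ j ≤ n`, `i + j > n` and `i + 2j ≤ 2n`, then there is a nonzero function in
`U_{[i,j]}(n,3)` whose support has cardinality exactly `2^{3(n-j)-i} · 3^{i+j-n}`. -/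
theorem stmt5 (n i j : ℕ) (hn : 1 ≤ n) (hij : i ≤ j) (hjn : j ≤ n) (hsum : n < i + j)
    (hsum2 : i + 2 * j ≤ 2 * n) :
    ∃ f : (Fin n → Fin 3) → ℝ, inUIJ n 3 i j f ∧ f ≠ 0 ∧
      suppCard n 3 f = 2 ^ (3 * (n - j) - i) * 3 ^ (i + j - n) :=
  stmt5_general n i j hij hsum hsum2
end

section
/- Let n ≥ 1 and let 0 ≤ i ≤ j ≤ n with i + 2j > 2n (equivalently i/2 + j > n). If f : Σ_3^n → ℝ is a nonzero function in U_{[i,j]}(n,3), then the cardinality of the support of f is at least 2^{i+j−n} · 3^{n−j}. -/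
/-- neighbor sum operator -/
noncomputable def nbr (n : ℕ) (f : (Fin n → Fin 3) → ℝ) (x : Fin n → Fin 3) : ℝ :=
  ∑ y ∈ Finset.univ.filter (fun y : Fin n → Fin 3 => hammingDist x y = 1), f y

lemma inU_iff (n k : ℕ) (f : (Fin n → Fin 3) → ℝ) :
    inU n 3 k f ↔ ∀ x, ((2*n : ℝ) - 3*k) * f x = nbr n f x := by
  unfold inU nbr
  constructor <;> intro h x <;> [skip; skip] <;>
  · have := h x
    norm_num at this ⊢
    linarith [this]

lemma hd_cons {m : ℕ} (a b : Fin 3) (x y : Fin m → Fin 3) :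
    hammingDist (Fin.cons a x : Fin (m+1) → Fin 3) (Fin.cons b y : Fin (m+1) → Fin 3) = (if a = b then 0 else 1) + hammingDist x y := by
  classical
  show (Finset.univ.filter fun i : Fin (m+1) =>
        (Fin.cons a x : Fin (m+1) → Fin 3) i ≠ (Fin.cons b y : Fin (m+1) → Fin 3) i).card
      = (if a = b then 0 else 1) + (Finset.univ.filter fun i => x i ≠ y i).card
  rw [Finset.card_filter, Finset.card_filter, Fin.sum_univ_succ]
  simp only [Fin.cons_zero, Fin.cons_succ]
  congr 1
  by_cases h : a = b <;> simp [h]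

lemma sum_consEquiv {M : Type*} [AddCommMonoid M] {m : ℕ} (G : (Fin (m+1) → Fin 3) → M) :
    ∑ y : Fin (m+1) → Fin 3, G y = ∑ b : Fin 3, ∑ y : Fin m → Fin 3, G (Fin.cons b y) := by
  rw [← (Fin.consEquiv (fun _ : Fin (m+1) => Fin 3)).sum_comp G]
  rw [Fintype.sum_prod_type]
  rfl

lemma nbr_cons {m : ℕ} (f : (Fin (m+1) → Fin 3) → ℝ) (a : Fin 3) (x : Fin m → Fin 3) :
    nbr (m+1) f (Fin.cons a x)
      = (∑ b ∈ Finset.univ.filter (fun b : Fin 3 => b ≠ a), f (Fin.cons b x))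
        + nbr m (fun y => f (Fin.cons a y)) x := by
  classical
  unfold nbr
  rw [Finset.sum_filter, Finset.sum_filter, Finset.sum_filter, sum_consEquiv]
  have key : ∀ b : Fin 3, ∀ y : Fin m → Fin 3,
      hammingDist (Fin.cons a x : Fin (m+1) → Fin 3) (Fin.cons b y) =
        (if a = b then 0 else 1) + hammingDist x y := fun b y => hd_cons a b x y
  rw [← Finset.add_sum_erase (Finset.univ : Finset (Fin 3))
      (fun b => ∑ y : Fin m → Fin 3, if hammingDist (Fin.cons a x : Fin (m+1) → Fin 3) (Fin.cons b y) = 1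
        then f (Fin.cons b y) else 0) (Finset.mem_univ a)]
  rw [add_comm]
  congr 1
  · -- b ≠ a part
    rw [← Finset.sum_filter, Finset.filter_ne']
    apply Finset.sum_congr rfl
    intro b hb
    have hba : a ≠ b := fun h => (Finset.ne_of_mem_erase hb) h.symm
    have step : ∀ y : Fin m → Fin 3,
        (if hammingDist (Fin.cons a x : Fin (m+1) → Fin 3) (Fin.cons b y) = 1
          then f (Fin.cons b y) else 0) = (if x = y then f (Fin.cons b y) else 0) := by
      intro y
      rw [key b y, if_neg hba]
      by_cases h : x = y
      · subst h; simp [hammingDist_self]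
      · have : hammingDist x y ≠ 0 := fun h0 => h (eq_of_hammingDist_eq_zero h0)
        rw [if_neg h, if_neg (by omega)]
    rw [Finset.sum_congr rfl (fun y _ => step y), Finset.sum_ite_eq (Finset.univ) x
      (fun y => f (Fin.cons b y))]
    simp
  · -- b = a part
    apply Finset.sum_congr rfl
    intro y _
    rw [key a y, if_pos rfl]
    simp

lemma nbr_sum_comm {m : ℕ} (F : Fin 3 → (Fin m → Fin 3) → ℝ) (x : Fin m → Fin 3) :
    nbr m (fun z => ∑ c : Fin 3, F c z) x = ∑ c : Fin 3, nbr m (F c) x := by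
  unfold nbr
  rw [Finset.sum_comm]

lemma filter_ne_sum {m : ℕ} (h : (Fin (m+1) → Fin 3) → ℝ) (x : Fin m → Fin 3) (c : Fin 3) :
    ∑ b ∈ Finset.univ.filter (fun b : Fin 3 => b ≠ c), h (Fin.cons b x)
      = (∑ b : Fin 3, h (Fin.cons b x)) - h (Fin.cons c x) := by
  rw [Finset.filter_ne', Finset.sum_erase_eq_sub (Finset.mem_univ c)]

lemma eig_sum {m : ℕ} {μ : ℝ} {h : (Fin (m+1) → Fin 3) → ℝ}
    (hh : ∀ y, μ * h y = nbr (m+1) h y) (x : Fin m → Fin 3) :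
    (μ - 2) * (∑ c : Fin 3, h (Fin.cons c x))
      = nbr m (fun z => ∑ c : Fin 3, h (Fin.cons c z)) x := by
  rw [nbr_sum_comm (fun c z => h (Fin.cons c z)) x]
  have step : ∀ c : Fin 3, nbr m (fun z => h (Fin.cons c z)) x
      = μ * h (Fin.cons c x) - ((∑ b : Fin 3, h (Fin.cons b x)) - h (Fin.cons c x)) := by
    intro c
    have := nbr_cons h c x
    rw [← hh (Fin.cons c x)] at this
    rw [filter_ne_sum] at this
    linarith [this]
  rw [Finset.sum_congr rfl (fun c _ => step c)]
  rw [Finset.sum_sub_distrib, Finset.sum_sub_distrib, ← Finset.mul_sum, Finset.sum_const]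
  simp only [Finset.card_univ, Fintype.card_fin]
  ring

lemma eig_diff {m : ℕ} {μ : ℝ} {h : (Fin (m+1) → Fin 3) → ℝ}
    (hh : ∀ y, μ * h y = nbr (m+1) h y) (a b : Fin 3) (x : Fin m → Fin 3) :
    (μ + 1) * (h (Fin.cons b x) - h (Fin.cons a x))
      = nbr m (fun z => h (Fin.cons b z) - h (Fin.cons a z)) x := by
  have hsub : nbr m (fun z => h (Fin.cons b z) - h (Fin.cons a z)) x
      = nbr m (fun z => h (Fin.cons b z)) x - nbr m (fun z => h (Fin.cons a z)) x := by
    unfold nbr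
    rw [← Finset.sum_sub_distrib]
  rw [hsub]
  have step : ∀ c : Fin 3, nbr m (fun z => h (Fin.cons c z)) x
      = μ * h (Fin.cons c x) - ((∑ e : Fin 3, h (Fin.cons e x)) - h (Fin.cons c x)) := by
    intro c
    have := nbr_cons h c x
    rw [← hh (Fin.cons c x)] at this
    rw [filter_ne_sum] at this
    linarith [this]
  rw [step a, step b]
  ring

lemma nbr_zero_dim (h : (Fin 0 → Fin 3) → ℝ) (x : Fin 0 → Fin 3) : nbr 0 h x = 0 := by
  unfold nbr
  have : (Finset.univ.filter (fun y : Fin 0 → Fin 3 => hammingDist x y = 1)) = ∅ := by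
    apply Finset.filter_false_of_mem
    intro y _
    have : x = y := Subsingleton.elim x y
    subst this
    simp [hammingDist_self]
  rw [this, Finset.sum_empty]

lemma notEig : ∀ (m : ℕ) (μ : ℝ), (∀ k : ℕ, k ≤ m → μ ≠ 2*m - 3*k) →
    ∀ (h : (Fin m → Fin 3) → ℝ), (∀ x, μ * h x = nbr m h x) → h = 0 := by
  intro m
  induction m with
  | zero =>
    intro μ hμ h hh
    have h0 : μ ≠ 0 := by
      have := hμ 0 (le_refl 0); simpa using this
    funext x
    have := hh x
    rw [nbr_zero_dim] at this
    have := mul_eq_zero.mp this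
    tauto
  | succ m ih =>
    intro μ hμ h hh
    have hS : (fun z => ∑ c : Fin 3, h (Fin.cons c z)) = 0 := by
      apply ih (μ - 2)
      · intro k hk hc
        exact hμ k (by omega) (by push_cast; linarith)
      · intro x; exact eig_sum hh x
    have hD : ∀ a b : Fin 3, (fun z => h (Fin.cons b z) - h (Fin.cons a z)) = 0 := by
      intro a b
      apply ih (μ + 1)
      · intro k hk hc
        exact hμ (k+1) (by omega) (by push_cast; linarith)
      · intro x; exact eig_diff hh a b x
    funext y
    have hy : y = Fin.cons (y 0) (Fin.tail y) := (Fin.cons_self_tail y).symm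
    set x := Fin.tail y with hx
    have heq : ∀ c : Fin 3, h (Fin.cons c x) = h (Fin.cons (y 0) x) := by
      intro c
      have := congrFun (hD c (y 0)) x
      simp only [Pi.zero_apply] at this
      linarith
    have hsum := congrFun hS x
    simp only [Pi.zero_apply] at hsum
    rw [Finset.sum_congr rfl (fun c _ => heq c), Finset.sum_const] at hsum
    simp only [Finset.card_univ, Fintype.card_fin, nsmul_eq_mul] at hsum
    have : h (Fin.cons (y 0) x) = 0 := by norm_num at hsum; linarith
    rw [hy]
    simpa using this

lemma inU_zero (n k : ℕ) : inU n 3 k (0 : (Fin n → Fin 3) → ℝ) := by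
  intro x; simp

lemma inU_smul {n k : ℕ} {f : (Fin n → Fin 3) → ℝ} (c : ℝ) (hf : inU n 3 k f) :
    inU n 3 k (fun x => c * f x) := by
  rw [inU_iff] at hf ⊢
  intro x
  show ((2*n : ℝ) - 3*k) * (c * f x) = nbr n (fun x => c * f x) x
  have : nbr n (fun x => c * f x) x = c * nbr n f x := by
    unfold nbr; rw [Finset.mul_sum]
  rw [this, ← hf x]; ring

lemma inU_sumRestrict {m k : ℕ} {g : (Fin (m+1) → Fin 3) → ℝ} (hg : inU (m+1) 3 k g) :
    inU m 3 k (fun x => ∑ c : Fin 3, g (Fin.cons c x)) := by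
  rw [inU_iff] at hg ⊢
  intro x
  have := eig_sum hg x
  have harith : ((2*(m+1) : ℝ) - 3*k) - 2 = (2*m : ℝ) - 3*k := by push_cast; ring
  rw [← harith]
  convert this using 2
  push_cast; ring

lemma inU_diffRestrict {m k : ℕ} (hk : 1 ≤ k) {g : (Fin (m+1) → Fin 3) → ℝ}
    (hg : inU (m+1) 3 k g) (a b : Fin 3) :
    inU m 3 (k-1) (fun x => g (Fin.cons b x) - g (Fin.cons a x)) := by
  rw [inU_iff] at hg ⊢
  intro x
  have := eig_diff hg a b x
  have harith : ((2*(m+1) : ℝ) - 3*k) + 1 = (2*m : ℝ) - 3*((k-1 : ℕ) : ℝ) := by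
    rw [Nat.cast_sub hk]; push_cast; ring
  rw [← harith]
  push_cast at this ⊢
  exact this

lemma inU_diff0 {m : ℕ} {g : (Fin (m+1) → Fin 3) → ℝ} (hg : inU (m+1) 3 0 g) (a b : Fin 3) :
    (fun x => g (Fin.cons b x) - g (Fin.cons a x)) = 0 := by
  rw [inU_iff] at hg
  apply notEig m (2*(m+1) - 3*(0:ℕ) + 1)
  · intro k hk hc
    have hk' : (k : ℝ) ≤ m := by exact_mod_cast hk
    push_cast at hc
    nlinarith [hk']
  · intro x
    have := eig_diff hg a b x
    push_cast at this ⊢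
    exact this

lemma inU_top {m k : ℕ} (hk : m < k) {h : (Fin m → Fin 3) → ℝ} (hh : inU m 3 k h) :
    h = 0 := by
  rw [inU_iff] at hh
  apply notEig m ((2*m : ℝ) - 3*k) _ h hh
  intro k' hk' hc
  have : (k : ℝ) = k' := by linarith
  have : k = k' := by exact_mod_cast this
  omega

lemma nbr_add {n : ℕ} (f g : (Fin n → Fin 3) → ℝ) (x : Fin n → Fin 3) :
    nbr n (f + g) x = nbr n f x + nbr n g x := by
  unfold nbr; simp [Finset.sum_add_distrib]

lemma inU_add {n k : ℕ} {f g : (Fin n → Fin 3) → ℝ} (hf : inU n 3 k f) (hg : inU n 3 k g) :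
    inU n 3 k (f + g) := by
  rw [inU_iff] at hf hg ⊢
  intro x
  rw [nbr_add, ← hf x, ← hg x]
  show _ * (f x + g x) = _
  ring

lemma inU_sub {n k : ℕ} {f g : (Fin n → Fin 3) → ℝ} (hf : inU n 3 k f) (hg : inU n 3 k g) :
    inU n 3 k (f - g) := by
  have := inU_add hf (inU_smul (-1) hg)
  convert this using 1
  funext x
  show f x - g x = f x + (-1) * g x
  ring

lemma nbr_finsum {n : ℕ} (F : Finset ℕ) (g : ℕ → (Fin n → Fin 3) → ℝ) (x : Fin n → Fin 3) :
    nbr n (∑ k ∈ F, g k) x = ∑ k ∈ F, nbr n (g k) x := by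
  unfold nbr
  rw [Finset.sum_comm]
  apply Finset.sum_congr rfl
  intro y _
  simp

lemma indep {n : ℕ} : ∀ (F : Finset ℕ) (g : ℕ → (Fin n → Fin 3) → ℝ),
    (∀ k ∈ F, inU n 3 k (g k)) → (∑ k ∈ F, g k) = 0 → ∀ k ∈ F, g k = 0 := by
  classical
  intro F
  induction F using Finset.induction_on with
  | empty => simp
  | @insert k0 F hk0 ih =>
    intro g hg hsum k hk
    -- key pointwise identity
    have hptw : ∀ x, ∑ k ∈ insert k0 F, ((2*n : ℝ) - 3*k) * g k x = 0 := by
      intro x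
      have h1 : ∀ k ∈ insert k0 F, ((2*n : ℝ) - 3*k) * g k x = nbr n (g k) x := by
        intro k hk
        exact (inU_iff n k (g k)).mp (hg k hk) x
      rw [Finset.sum_congr rfl h1, ← nbr_finsum, hsum]
      unfold nbr; simp
    have hptw0 : ∀ x, ∑ k ∈ insert k0 F, g k x = 0 := by
      intro x
      have := congrFun hsum x
      simpa using this
    -- coefficient functions
    set g' : ℕ → (Fin n → Fin 3) → ℝ := fun k => fun x => (3*(k0:ℝ) - 3*k) * g k x with hg'
    have hmem' : ∀ k ∈ F, inU n 3 k (g' k) := by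
      intro k hk
      exact inU_smul _ (hg k (Finset.mem_insert_of_mem hk))
    have hsum' : (∑ k ∈ F, g' k) = 0 := by
      funext x
      show (∑ k ∈ F, g' k) x = (0:ℝ)
      have e1 : ∑ k ∈ insert k0 F, ((3*(k0:ℝ) - 3*k) * g k x) = 0 := by
        have e2 : ∀ k ∈ insert k0 F, (3*(k0:ℝ) - 3*k) * g k x
            = ((2*n : ℝ) - 3*k) * g k x - ((2*n : ℝ) - 3*k0) * g k x := by
          intro k _; ring
        rw [Finset.sum_congr rfl e2, Finset.sum_sub_distrib, hptw x, ← Finset.mul_sum, hptw0 x]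
        ring
      rw [Finset.sum_insert hk0] at e1
      simp only [sub_self, zero_mul] at e1
      have : (∑ k ∈ F, g' k) x = ∑ k ∈ F, g' k x := by simp
      rw [this]
      have e3 : ∑ k ∈ F, g' k x = ∑ x_1 ∈ F, (3 * (k0:ℝ) - 3 * (x_1:ℕ)) * g x_1 x := rfl
      rw [e3]
      linarith [e1]
    have hzero : ∀ k ∈ F, g' k = 0 := ih g' hmem' hsum'
    rcases Finset.mem_insert.mp hk with rfl | hkF
    · -- g k = 0 where k is the inserted index
      have hz : ∀ l ∈ F, g l = 0 := by
        intro l hlF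
        have hco : (3*(k:ℝ) - 3*l) ≠ 0 := by
          have hne : k ≠ l := fun h => hk0 (h ▸ hlF)
          intro hc
          apply hne
          have : (k : ℝ) = l := by linarith
          exact_mod_cast this
        funext x
        have := congrFun (hzero l hlF) x
        simp only [hg', Pi.zero_apply] at this
        rcases mul_eq_zero.mp this with h | h
        · exact absurd h hco
        · exact h
      have hz2 : ∑ l ∈ F, g l = 0 := Finset.sum_eq_zero hz
      rw [Finset.sum_insert hk0, hz2, add_zero] at hsum
      exact hsum
    · have hco : (3*(k0:ℝ) - 3*k) ≠ 0 := by
        have hne : k0 ≠ k := fun h => hk0 (h ▸ hkF)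
        intro hc
        apply hne
        have : (k0 : ℝ) = k := by linarith
        exact_mod_cast this
      funext x
      have := congrFun (hzero k hkF) x
      simp only [hg', Pi.zero_apply] at this
      rcases mul_eq_zero.mp this with h | h
      · exact absurd h hco
      · exact h

lemma inUIJ_zero (n i j : ℕ) : inUIJ n 3 i j (0 : (Fin n → Fin 3) → ℝ) := by
  exact ⟨fun _ => 0, fun k _ => inU_zero n k, by simp⟩

lemma inUIJ_mono {n i j i' j' : ℕ} (hi : i' ≤ i) (hj : j ≤ j')
    {f : (Fin n → Fin 3) → ℝ} (hf : inUIJ n 3 i j f) : inUIJ n 3 i' j' f := by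
  classical
  obtain ⟨g, hg, rfl⟩ := hf
  refine ⟨fun k => if k ∈ Finset.Icc i j then g k else 0, ?_, ?_⟩
  · intro k _
    show inU n 3 k (if k ∈ Finset.Icc i j then g k else 0)
    by_cases h : k ∈ Finset.Icc i j
    · rw [if_pos h]; exact hg k h
    · rw [if_neg h]; exact inU_zero n k
  · rw [Finset.sum_ite_mem, Finset.inter_eq_right.mpr (Finset.Icc_subset_Icc hi hj)]

lemma inUIJ_add {n i j : ℕ} {f g : (Fin n → Fin 3) → ℝ}
    (hf : inUIJ n 3 i j f) (hg : inUIJ n 3 i j g) : inUIJ n 3 i j (f + g) := by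
  obtain ⟨u, hu, rfl⟩ := hf
  obtain ⟨v, hv, rfl⟩ := hg
  exact ⟨fun k => u k + v k, fun k hk => inU_add (hu k hk) (hv k hk),
    by rw [← Finset.sum_add_distrib]⟩

lemma inUIJ_smul {n i j : ℕ} (c : ℝ) {f : (Fin n → Fin 3) → ℝ}
    (hf : inUIJ n 3 i j f) : inUIJ n 3 i j (fun x => c * f x) := by
  obtain ⟨u, hu, rfl⟩ := hf
  refine ⟨fun k => fun x => c * u k x, fun k hk => inU_smul c (hu k hk), ?_⟩
  funext x
  simp [Finset.mul_sum]

lemma inUIJ_empty {n i j : ℕ} (hij : j < i) {f : (Fin n → Fin 3) → ℝ}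
    (hf : inUIJ n 3 i j f) : f = 0 := by
  obtain ⟨g, _, rfl⟩ := hf
  rw [Finset.Icc_eq_empty (by omega), Finset.sum_empty]

lemma inUIJ_inter {n i j i' j' : ℕ} {f : (Fin n → Fin 3) → ℝ}
    (h1 : inUIJ n 3 i j f) (h2 : inUIJ n 3 i' j' f) :
    inUIJ n 3 (max i i') (min j j') f := by
  classical
  obtain ⟨g, hg, hfg⟩ := h1
  obtain ⟨h, hh, hfh⟩ := h2
  set F := Finset.Icc (min i i') (max j j') with hF
  set G : ℕ → (Fin n → Fin 3) → ℝ := fun k =>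
    (if k ∈ Finset.Icc i j then g k else 0) - (if k ∈ Finset.Icc i' j' then h k else 0) with hG
  have hGmem : ∀ k ∈ F, inU n 3 k (G k) := by
    intro k _
    apply inU_sub
    · by_cases hx : k ∈ Finset.Icc i j
      · rw [if_pos hx]; exact hg k hx
      · rw [if_neg hx]; exact inU_zero n k
    · by_cases hx : k ∈ Finset.Icc i' j'
      · rw [if_pos hx]; exact hh k hx
      · rw [if_neg hx]; exact inU_zero n k
  have hGsum : ∑ k ∈ F, G k = 0 := by
    have e1 : ∑ k ∈ F, (if k ∈ Finset.Icc i j then g k else 0) = f := by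
      rw [Finset.sum_ite_mem, Finset.inter_eq_right.mpr
        (Finset.Icc_subset_Icc (min_le_left _ _) (le_max_left _ _)), ← hfg]
    have e2 : ∑ k ∈ F, (if k ∈ Finset.Icc i' j' then h k else 0) = f := by
      rw [Finset.sum_ite_mem, Finset.inter_eq_right.mpr
        (Finset.Icc_subset_Icc (min_le_right _ _) (le_max_right _ _)), ← hfh]
    rw [show (∑ k ∈ F, G k) = (∑ k ∈ F, (if k ∈ Finset.Icc i j then g k else 0))
        - (∑ k ∈ F, (if k ∈ Finset.Icc i' j' then h k else 0)) from by
      rw [← Finset.sum_sub_distrib], e1, e2, sub_self]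
  have hGzero : ∀ k ∈ F, G k = 0 := indep F G hGmem hGsum
  -- now: for k ∈ Icc i j \ Icc i' j', g k = 0
  refine ⟨g, ?_, ?_⟩
  · intro k hk
    apply hg
    exact Finset.Icc_subset_Icc (le_max_left _ _) (min_le_left _ _) hk
  · rw [hfg]
    symm
    apply Finset.sum_subset
    · exact Finset.Icc_subset_Icc (le_max_left _ _) (min_le_left _ _)
    · intro k hk1 hk2
      have hkF : k ∈ F := Finset.Icc_subset_Icc (min_le_left _ _) (le_max_left _ _) hk1
      have := hGzero k hkF
      rw [hG] at this
      simp only at this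
      rw [if_pos hk1] at this
      have hk2' : k ∉ Finset.Icc i' j' := by
        intro hc
        apply hk2
        simp only [Finset.mem_Icc] at hk1 hc ⊢
        omega
      rw [if_neg hk2'] at this
      rw [sub_zero] at this
      exact this

lemma RSum {m i j : ℕ} {f : (Fin (m+1) → Fin 3) → ℝ} (hf : inUIJ (m+1) 3 i j f) :
    inUIJ m 3 i (min j m) (fun x => ∑ c : Fin 3, f (Fin.cons c x)) := by
  classical
  obtain ⟨g, hg, rfl⟩ := hf
  set s : ℕ → (Fin m → Fin 3) → ℝ := fun k => fun x => ∑ c : Fin 3, g k (Fin.cons c x) with hs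
  have hsmem : ∀ k ∈ Finset.Icc i j, inU m 3 k (s k) := fun k hk => inU_sumRestrict (hg k hk)
  have hfun : (fun x => ∑ c : Fin 3, (∑ k ∈ Finset.Icc i j, g k) (Fin.cons c x))
      = ∑ k ∈ Finset.Icc i j, s k := by
    funext x
    rw [Finset.sum_apply]
    simp only [Finset.sum_apply, hs]
    rw [Finset.sum_comm]
  rw [hfun]
  refine ⟨s, ?_, ?_⟩
  · intro k hk
    apply hsmem
    exact Finset.Icc_subset_Icc le_rfl (min_le_left _ _) hk
  · symm
    apply Finset.sum_subset (Finset.Icc_subset_Icc le_rfl (min_le_left _ _))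
    intro k hk1 hk2
    have hkm : m < k := by
      simp only [Finset.mem_Icc] at hk1 hk2
      omega
    exact inU_top hkm (hsmem k hk1)

lemma RDiff {m i j : ℕ} (hj : 1 ≤ j) {f : (Fin (m+1) → Fin 3) → ℝ}
    (hf : inUIJ (m+1) 3 i j f) (a b : Fin 3) :
    inUIJ m 3 (i-1) (j-1) (fun x => f (Fin.cons b x) - f (Fin.cons a x)) := by
  classical
  obtain ⟨g, hg, rfl⟩ := hf
  set d : ℕ → (Fin m → Fin 3) → ℝ :=
    fun k => fun x => g k (Fin.cons b x) - g k (Fin.cons a x) with hd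
  have hfun : (fun x => (∑ k ∈ Finset.Icc i j, g k) (Fin.cons b x)
      - (∑ k ∈ Finset.Icc i j, g k) (Fin.cons a x)) = ∑ k ∈ Finset.Icc i j, d k := by
    funext x
    rw [Finset.sum_apply]
    simp only [Finset.sum_apply, hd]
    rw [← Finset.sum_sub_distrib]
  rw [hfun]
  have hdrop : ∑ k ∈ Finset.Icc i j, d k = ∑ k ∈ Finset.Icc (max i 1) j, d k := by
    symm
    apply Finset.sum_subset (Finset.Icc_subset_Icc (le_max_left _ _) le_rfl)
    intro k hk1 hk2
    have hk0 : k = 0 := by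
      simp only [Finset.mem_Icc] at hk1 hk2; omega
    subst hk0
    exact inU_diff0 (hg 0 hk1) a b
  rw [hdrop]
  refine ⟨fun l => d (l+1), ?_, ?_⟩
  · intro l hl
    simp only [Finset.mem_Icc] at hl
    have h1 : 1 ≤ l + 1 := by omega
    have h2 : (l+1) ∈ Finset.Icc i j := by simp only [Finset.mem_Icc]; omega
    have := inU_diffRestrict h1 (hg (l+1) h2) a b
    simpa using this
  · apply Finset.sum_nbij' (fun k => k - 1) (fun l => l + 1)
    · intro k hk; simp only [Finset.mem_Icc] at hk ⊢; omega
    · intro l hl; simp only [Finset.mem_Icc] at hl ⊢; omega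
    · intro k hk; simp only [Finset.mem_Icc] at hk; omega
    · intro l hl; rfl
    · intro k hk
      simp only [Finset.mem_Icc] at hk
      have : k - 1 + 1 = k := by omega
      rw [this]

lemma RRest {m i j : ℕ} (hj : 1 ≤ j) (hjn : j ≤ m + 1) {f : (Fin (m+1) → Fin 3) → ℝ}
    (hf : inUIJ (m+1) 3 i j f) (a : Fin 3) :
    inUIJ m 3 (i-1) (min j m) (fun x => f (Fin.cons a x)) := by
  classical
  have hS : inUIJ m 3 (i-1) (min j m) (fun x => ∑ c : Fin 3, f (Fin.cons c x)) :=
    inUIJ_mono (Nat.sub_le i 1) le_rfl (RSum hf)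
  have hjm : j - 1 ≤ min j m := by omega
  have hDc : ∀ c : Fin 3, inUIJ m 3 (i-1) (min j m)
      (fun x => f (Fin.cons a x) - f (Fin.cons c x)) := fun c =>
    inUIJ_mono le_rfl hjm (RDiff hj hf c a)
  have hD : inUIJ m 3 (i-1) (min j m)
      (fun x => ∑ c : Fin 3, (f (Fin.cons a x) - f (Fin.cons c x))) := by
    have e : (fun x => ∑ c : Fin 3, (f (Fin.cons a x) - f (Fin.cons c x)))
        = (fun x => f (Fin.cons a x) - f (Fin.cons 0 x))
          + ((fun x => f (Fin.cons a x) - f (Fin.cons 1 x))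
          + (fun x => f (Fin.cons a x) - f (Fin.cons 2 x))) := by
      funext x
      rw [Fin.sum_univ_three]
      simp only [Pi.add_apply]
      ring
    rw [e]
    exact inUIJ_add (hDc 0) (inUIJ_add (hDc 1) (hDc 2))
  have key : (fun x => f (Fin.cons a x)) = (fun x => (1/3 : ℝ) *
      ((∑ c : Fin 3, f (Fin.cons c x)) + (∑ c : Fin 3, (f (Fin.cons a x) - f (Fin.cons c x))))) := by
    funext x
    rw [Finset.sum_sub_distrib, Finset.sum_const]
    simp only [Finset.card_univ, Fintype.card_fin, nsmul_eq_mul]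
    push_cast
    ring
  rw [key]
  exact inUIJ_smul _ (inUIJ_add hS hD)

lemma suppCard_pos {n : ℕ} {f : (Fin n → Fin 3) → ℝ} (hf : f ≠ 0) : 1 ≤ suppCard n 3 f := by
  classical
  unfold suppCard
  rw [Nat.one_le_iff_ne_zero, ← Nat.pos_iff_ne_zero, Finset.card_pos]
  obtain ⟨x, hx⟩ := Function.ne_iff.mp hf
  exact ⟨x, Finset.mem_filter.mpr ⟨Finset.mem_univ x, hx⟩⟩

lemma suppCard_split {m : ℕ} (f : (Fin (m+1) → Fin 3) → ℝ) :
    suppCard (m+1) 3 f = ∑ c : Fin 3, suppCard m 3 (fun x => f (Fin.cons c x)) := by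
  classical
  unfold suppCard
  simp only [Finset.card_filter]
  exact sum_consEquiv (fun y => if f y ≠ 0 then 1 else 0)

lemma suppCard_add_le {n : ℕ} (f g : (Fin n → Fin 3) → ℝ) :
    suppCard n 3 (fun x => f x + g x) ≤ suppCard n 3 f + suppCard n 3 g := by
  classical
  unfold suppCard
  have hsub : (Finset.univ.filter (fun x : Fin n → Fin 3 => (fun x => f x + g x) x ≠ 0))
      ⊆ (Finset.univ.filter (fun x => f x ≠ 0)) ∪ (Finset.univ.filter (fun x => g x ≠ 0)) := by
    intro x hx
    simp only [Finset.mem_filter, Finset.mem_union, Finset.mem_univ, true_and] at hx ⊢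
    by_contra hc
    push_neg at hc
    apply hx
    rw [hc.1, hc.2, add_zero]
  calc _ ≤ ((Finset.univ.filter (fun x : Fin n → Fin 3 => f x ≠ 0))
        ∪ (Finset.univ.filter (fun x => g x ≠ 0))).card := Finset.card_le_card hsub
    _ ≤ _ := Finset.card_union_le _ _

lemma suppCard_neg {n : ℕ} (f : (Fin n → Fin 3) → ℝ) :
    suppCard n 3 (fun x => - f x) = suppCard n 3 f := by
  unfold suppCard
  congr 1
  apply Finset.filter_congr
  intro x _
  simp

theorem claimC : ∀ (n i j : ℕ), i ≤ j → j ≤ n → ∀ f : (Fin n → Fin 3) → ℝ,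
    inUIJ n 3 i j f → f ≠ 0 → 2 ^ (i + j - n) * 3 ^ (n - j) ≤ suppCard n 3 f := by
  intro n
  induction n with
  | zero =>
    intro i j hij hjn f hf hne
    have hi : i = 0 := by omega
    have hj : j = 0 := by omega
    subst hi; subst hj
    simpa using suppCard_pos hne
  | succ m ih =>
    intro i j hij hjn f hf hne
    set Fc : Fin 3 → (Fin m → Fin 3) → ℝ := fun c => fun x => f (Fin.cons c x) with hFc
    have hsplit : suppCard (m+1) 3 f = ∑ c : Fin 3, suppCard m 3 (Fc c) := suppCard_split f
    have hex : ∃ b : Fin 3, Fc b ≠ 0 := by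
      obtain ⟨x, hx⟩ := Function.ne_iff.mp hne
      refine ⟨x 0, Function.ne_iff.mpr ⟨Fin.tail x, ?_⟩⟩
      show f (Fin.cons (x 0) (Fin.tail x)) ≠ 0
      rw [Fin.cons_self_tail]
      simpa using hx
    by_cases hj0 : j = 0
    · -- case j = 0 (hence i = 0) : f in U_0
      have hi0 : i = 0 := by omega
      subst hj0; subst hi0
      have hU0 : inU (m+1) 3 0 f := by
        obtain ⟨g, hg, hfe⟩ := hf
        rw [Finset.Icc_self, Finset.sum_singleton] at hfe
        rw [hfe]
        exact hg 0 (by simp)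
      have hconst : ∀ (c b : Fin 3) (x : Fin m → Fin 3),
          f (Fin.cons c x) = f (Fin.cons b x) := by
        intro c b x
        have := congrFun (inU_diff0 hU0 b c) x
        simp only [Pi.zero_apply] at this
        linarith
      obtain ⟨b, hb⟩ := hex
      have hcne : ∀ c : Fin 3, Fc c ≠ 0 := by
        intro c
        have : Fc c = Fc b := funext fun x => hconst c b x
        rw [this]; exact hb
      have hmem : ∀ c : Fin 3, inUIJ m 3 0 0 (Fc c) := by
        intro c
        have hS := RSum hf
        have hmin : min 0 m = 0 := by omega
        rw [hmin] at hS
        have key : Fc c = (fun x => (1/3 : ℝ) * ((fun z => ∑ e : Fin 3, f (Fin.cons e z)) x)) := by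
          funext x
          have : ∑ e : Fin 3, f (Fin.cons e x) = 3 * f (Fin.cons c x) := by
            rw [Finset.sum_congr rfl (fun e _ => hconst e c x), Finset.sum_const]
            simp only [Finset.card_univ, Fintype.card_fin, nsmul_eq_mul]
            push_cast; ring
          show f (Fin.cons c x) = (1/3 : ℝ) * (∑ e : Fin 3, f (Fin.cons e x))
          rw [this]; ring
        rw [key]
        exact inUIJ_smul _ hS
      have hIH : ∀ c : Fin 3, 3 ^ m ≤ suppCard m 3 (Fc c) := by
        intro c
        have := ih 0 0 le_rfl (Nat.zero_le m) (Fc c) (hmem c) (hcne c)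
        simpa using this
      have : 3 * 3 ^ m ≤ ∑ c : Fin 3, suppCard m 3 (Fc c) := by
        calc 3 * 3 ^ m = ∑ _c : Fin 3, 3 ^ m := by
              rw [Finset.sum_const]; simp [mul_comm]
          _ ≤ _ := Finset.sum_le_sum (fun c _ => hIH c)
      rw [hsplit]
      have e1 : (0 + 0 : ℕ) - (m+1) = 0 := by omega
      have e2 : (m + 1 : ℕ) - 0 = m + 1 := by omega
      rw [e1, e2, pow_zero, one_mul, pow_succ, mul_comm (3^m) 3]
      exact this
    · have hj1 : 1 ≤ j := by omega
      by_cases hA : ∃ a : Fin 3, Fc a = 0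
      · obtain ⟨a, ha⟩ := hA
        have haz : ∀ x, f (Fin.cons a x) = 0 := fun x => congrFun ha x
        set S : (Fin m → Fin 3) → ℝ := fun x => ∑ c : Fin 3, f (Fin.cons c x) with hSdef
        have hSmem1 : inUIJ m 3 i (min j m) S := RSum hf
        have hSmem2 : inUIJ m 3 (i-1) (j-1) S := by
          have e : S = (fun x => f (Fin.cons 0 x) - f (Fin.cons a x))
              + ((fun x => f (Fin.cons 1 x) - f (Fin.cons a x))
              + (fun x => f (Fin.cons 2 x) - f (Fin.cons a x))) := by
            funext x
            simp only [hSdef, Pi.add_apply]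
            rw [Fin.sum_univ_three, haz x]
            ring
          rw [e]
          exact inUIJ_add (RDiff hj1 hf a 0) (inUIJ_add (RDiff hj1 hf a 1) (RDiff hj1 hf a 2))
        by_cases hS0 : S = 0
        · -- two opposite nonzero restrictions
          obtain ⟨b, hb⟩ := hex
          have hcex : ∃ c, c ≠ b ∧ Fc c ≠ 0 := by
            by_contra hc
            push_neg at hc
            have : S = Fc b := by
              funext x
              show ∑ c : Fin 3, f (Fin.cons c x) = f (Fin.cons b x)
              apply Finset.sum_eq_single b
              · intro c _ hcb
                exact congrFun (hc c hcb) x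
              · intro h; exact absurd (Finset.mem_univ b) h
            rw [hS0] at this
            exact hb this.symm
          obtain ⟨c, hcb, hcne⟩ := hcex
          have hmemd : ∀ e : Fin 3, inUIJ m 3 (i-1) (j-1) (Fc e) := by
            intro e
            have : Fc e = fun x => f (Fin.cons e x) - f (Fin.cons a x) := by
              funext x; rw [haz]; show f (Fin.cons e x) = _; ring
            rw [this]
            exact RDiff hj1 hf a e
          have hIHb := ih (i-1) (j-1) (by omega) (by omega) (Fc b) (hmemd b) hb
          have hIHc := ih (i-1) (j-1) (by omega) (by omega) (Fc c) (hmemd c) hcne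
          have hsum2 : suppCard m 3 (Fc b) + suppCard m 3 (Fc c)
              ≤ ∑ e : Fin 3, suppCard m 3 (Fc e) := by
            have hsubset : ({b, c} : Finset (Fin 3)) ⊆ Finset.univ := Finset.subset_univ _
            calc suppCard m 3 (Fc b) + suppCard m 3 (Fc c)
                = ∑ e ∈ ({b, c} : Finset (Fin 3)), suppCard m 3 (Fc e) := by
                  rw [Finset.sum_pair (Ne.symm hcb)]
              _ ≤ _ := Finset.sum_le_sum_of_subset hsubset
          rw [hsplit]
          have hexp : 2 ^ (i + j - (m+1)) * 3 ^ ((m+1) - j)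
              ≤ 2 * (2 ^ ((i-1) + (j-1) - m) * 3 ^ (m - (j-1))) := by
            have e3 : m - (j-1) = (m+1) - j := by omega
            have e2 : i + j - (m+1) ≤ ((i-1) + (j-1) - m) + 1 := by omega
            calc 2 ^ (i + j - (m+1)) * 3 ^ ((m+1) - j)
                ≤ 2 ^ (((i-1) + (j-1) - m) + 1) * 3 ^ ((m+1) - j) :=
                  Nat.mul_le_mul_right _ (Nat.pow_le_pow_right (by omega) e2)
              _ = 2 * (2 ^ ((i-1) + (j-1) - m) * 3 ^ (m - (j-1))) := by
                  rw [e3, pow_succ]; ring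
          calc 2 ^ (i + j - (m+1)) * 3 ^ ((m+1) - j)
              ≤ 2 * (2 ^ ((i-1) + (j-1) - m) * 3 ^ (m - (j-1))) := hexp
            _ ≤ suppCard m 3 (Fc b) + suppCard m 3 (Fc c) := by
                rw [two_mul]; exact Nat.add_le_add hIHb hIHc
            _ ≤ _ := hsum2
        · -- S ≠ 0
          have hint := inUIJ_inter hSmem1 hSmem2
          have hmax : max i (i-1) = i := by omega
          have hmin : min (min j m) (j-1) = j - 1 := by omega
          rw [hmax, hmin] at hint
          by_cases hij2 : i ≤ j - 1
          · have hIHS := ih i (j-1) hij2 (by omega) S hint hS0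
            have hSle : suppCard m 3 S ≤ ∑ e : Fin 3, suppCard m 3 (Fc e) := by
              have e : S = fun x => (Fc 0 x + Fc 1 x) + Fc 2 x := by
                funext x
                simp only [hSdef]
                rw [Fin.sum_univ_three]
              calc suppCard m 3 S = suppCard m 3 (fun x => (Fc 0 x + Fc 1 x) + Fc 2 x) := by rw [e]
                _ ≤ suppCard m 3 (fun x => Fc 0 x + Fc 1 x) + suppCard m 3 (Fc 2) :=
                    suppCard_add_le _ _
                _ ≤ (suppCard m 3 (Fc 0) + suppCard m 3 (Fc 1)) + suppCard m 3 (Fc 2) :=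
                    Nat.add_le_add_right (suppCard_add_le _ _) _
                _ = _ := by rw [Fin.sum_univ_three]
            rw [hsplit]
            have e1 : i + (j-1) - m = i + j - (m+1) := by omega
            have e2 : m - (j-1) = (m+1) - j := by omega
            rw [e1, e2] at hIHS
            exact le_trans hIHS hSle
          · exfalso
            exact hS0 (inUIJ_empty (by omega) hint)
      · -- all restrictions nonzero
        push_neg at hA
        have hrest : ∀ c : Fin 3, inUIJ m 3 (i-1) (min j m) (Fc c) :=
          fun c => RRest hj1 hjn hf c
        have hIHc : ∀ c : Fin 3,
            2 ^ ((i-1) + min j m - m) * 3 ^ (m - min j m) ≤ suppCard m 3 (Fc c) :=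
          fun c => ih (i-1) (min j m) (by omega) (by omega) (Fc c) (hrest c) (hA c)
        have hsum3 : 3 * (2 ^ ((i-1) + min j m - m) * 3 ^ (m - min j m))
            ≤ ∑ c : Fin 3, suppCard m 3 (Fc c) := by
          calc 3 * (2 ^ ((i-1) + min j m - m) * 3 ^ (m - min j m))
              = ∑ _c : Fin 3, (2 ^ ((i-1) + min j m - m) * 3 ^ (m - min j m)) := by
                rw [Finset.sum_const]; simp [mul_comm]
            _ ≤ _ := Finset.sum_le_sum (fun c _ => hIHc c)
        rw [hsplit]
        refine le_trans ?_ hsum3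
        rcases le_or_gt j m with hjm | hjm
        · have hminj : min j m = j := by omega
          rw [hminj]
          have e1 : (i-1) + j - m = i + j - (m+1) := by omega
          have e2 : (m+1) - j = (m - j) + 1 := by omega
          rw [e1, e2, pow_succ]
          ring_nf
          omega
        · have hjeq : j = m + 1 := by omega
          subst hjeq
          have hminj : min (m+1) m = m := by omega
          rw [hminj]
          have e1 : (i-1) + m - m = i - 1 := by omega
          have e2 : (m+1) - (m+1) = 0 := by omega
          have e3 : i + (m+1) - (m+1) = i := by omega
          have e4 : m - m = 0 := by omega
          rw [e1, e2, e3, e4]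
          simp only [pow_zero, mul_one]
          rcases Nat.eq_zero_or_pos i with hi0 | hi1
          · subst hi0; simp
          · have h5 : i = (i - 1) + 1 := by omega
            conv_lhs => rw [h5, pow_succ]
            have : 2 ^ (i-1) * 2 ≤ 2 ^ (i-1) * 3 := Nat.mul_le_mul_left _ (by omega)
            omega

/-- If `0 ≤ i ≤ j ≤ n`, `i + 2j > 2n` and `f` is a nonzero function in `U_{[i,j]}(n,3)`,
then `|Supp(f)| ≥ 2^{i+j-n} · 3^{n-j}`. -/
theorem stmt7 (n i j : ℕ) (hn : 1 ≤ n) (hij : i ≤ j) (hjn : j ≤ n) (hsum : 2 * n < i + 2 * j)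
    (f : (Fin n → Fin 3) → ℝ) (hf : inUIJ n 3 i j f) (hne : f ≠ 0) :
    2 ^ (i + j - n) * 3 ^ (n - j) ≤ suppCard n 3 f := by
  exact claimC n i j hij hjn f hf hne
end

section
/- Let n ≥ 1 and let i be an integer with 2n/3 < i ≤ n (equivalently 3i > 2n). If f : Σ_3^n → ℝ is a nonzero function in the eigenspace U_i(n,3), then the cardinality of the support of f is at least 2^{2i−n} · 3^{n−i}, and this bound is sharp: there exists such a nonzero f whose support has cardinality exactly 2^{2i−n} · 3^{n−i}. -/
open Finset Module.End

theorem iSupIndep.mem_biSup_inter {ι R M : Type*} [Ring R] [AddCommGroup M] [Module R M]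
    [DecidableEq ι] {E : ι → Submodule R M} (hE : iSupIndep E) {s t : Finset ι} {x : M}
    (hs : x ∈ ⨆ i ∈ s, E i) (ht : x ∈ ⨆ i ∈ t, E i) : x ∈ ⨆ i ∈ s ∩ t, E i := by
  rw [← sdiff_union_inter s t, Finset.iSup_union, Submodule.mem_sup] at hs
  obtain ⟨y, hy, z, hz, rfl⟩ := hs
  have hzt : z ∈ ⨆ i ∈ t, E i :=
    (biSup_mono fun i hi => Finset.mem_of_mem_inter_right hi : ⨆ i ∈ s ∩ t, E i ≤ _) hz
  have hyt : y ∈ ⨆ i ∈ t, E i := by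
    have := sub_mem ht hzt
    rwa [add_sub_cancel_right] at this
  have hdisj : Disjoint (⨆ i ∈ s \ t, E i) (⨆ i ∈ t, E i) := by
    have := hE.disjoint_biSup_biSup (s := ↑(s \ t)) (t := ↑t) (Finset.disjoint_coe.2 sdiff_disjoint)
    simpa only [Finset.mem_coe] using this
  rw [Submodule.disjoint_def.1 hdisj y hy hyt, zero_add]
  exact hz

namespace HammingGraph

variable {m k n q : ℕ}

def adj (n q : ℕ) : Module.End ℝ ((Fin n → Fin q) → ℝ) where
  toFun f x := ∑ y with hammingDist x y = 1, f y
  map_add' f g := by ext x; simp [sum_add_distrib]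
  map_smul' c f := by ext x; simp [mul_sum]

lemma adj_apply (f : (Fin n → Fin q) → ℝ) (x : Fin n → Fin q) :
    adj n q f x = ∑ y with hammingDist x y = 1, f y := rfl

lemma hammingDist_append {α : Type*} [DecidableEq α] (u u' : Fin m → α) (v v' : Fin k → α) :
    hammingDist (Fin.append u v) (Fin.append u' v') = hammingDist u u' + hammingDist v v' := by
  simp only [hammingDist, card_filter, Fin.sum_univ_add, Fin.append_left, Fin.append_right]

lemma adj_append (f : (Fin (m + k) → Fin q) → ℝ) (u : Fin m → Fin q) (v : Fin k → Fin q) :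
    adj (m + k) q f (Fin.append u v) =
      ∑ u' with hammingDist u u' = 1, f (Fin.append u' v) +
        ∑ v' with hammingDist v v' = 1, f (Fin.append u v') := by
  have hnbr (u' : Fin m → Fin q) (v' : Fin k → Fin q) :
      hammingDist (Fin.append u v) (Fin.append u' v') = 1 ↔
        (hammingDist u u' = 1 ∧ v = v') ∨ (hammingDist v v' = 1 ∧ u = u') := by
    rw [hammingDist_append]
    rcases eq_or_ne u u' with rfl | hu <;> rcases eq_or_ne v v' with rfl | hv
    · simp
    · simp [hv]
    · simp [hu]
    · have := hammingDist_pos.2 hu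
      have := hammingDist_pos.2 hv
      simp only [hu, hv, and_false, or_false, iff_false]
      omega
  rw [adj_apply, sum_equiv (Fin.appendEquiv m k).symm
      (t := ({u' | hammingDist u u' = 1} : Finset _) ×ˢ {v} ∪
        {u} ×ˢ ({v' | hammingDist v v' = 1} : Finset _))
      (g := fun p => f (Fin.append p.1 p.2)) (fun y => ?_)
      (fun y _ => by simp [Fin.append_castAdd_natAdd]),
    sum_union ?_, sum_product, sum_product]
  · simp
  · simp only [disjoint_left, mem_product, mem_singleton, not_and]
    rintro ⟨_, _⟩ ⟨-, rfl⟩ rfl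
    simp
  · simpa [Fin.append_castAdd_natAdd] using
      hnbr (fun i => y (Fin.castAdd k i)) (fun i => y (Fin.natAdd m i))

def slice (a : Fin q) : ((Fin (n + 1) → Fin q) → ℝ) →ₗ[ℝ] (Fin n → Fin q) → ℝ :=
  LinearMap.funLeft ℝ ℝ fun u => Fin.append u fun _ => a

lemma slice_apply (a : Fin q) (F : (Fin (n + 1) → Fin q) → ℝ) (u : Fin n → Fin q) :
    slice a F u = F (Fin.append u fun _ => a) := rfl

lemma eq_append_last {α : Type*} (x : Fin (n + 1) → α) :
    x = Fin.append (fun i => x (Fin.castAdd 1 i)) fun _ => x (Fin.last n) := by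
  conv_lhs => rw [← Fin.append_castAdd_natAdd (f := x)]
  congr 1
  ext i
  rw [Subsingleton.elim i 0]
  rfl

lemma eq_zero_of_forall_slice_eq_zero {F : (Fin (n + 1) → Fin q) → ℝ}
    (h : ∀ a, slice a F = 0) : F = 0 := by
  ext x
  rw [eq_append_last x]
  exact congrFun (h _) _

lemma adj_slice (F : (Fin (n + 1) → Fin q) → ℝ) (a : Fin q) (u : Fin n → Fin q) :
    adj (n + 1) q F (Fin.append u fun _ => a) =
      adj n q (slice a F) u + ∑ b ∈ univ.erase a, slice b F u := by
  rw [adj_append]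
  congr 1
  refine sum_equiv (Equiv.funUnique (Fin 1) (Fin q)) (fun v => ?_) (fun v _ => ?_)
  · simp [hammingDist, card_filter, eq_comm (a := a)]
  · rw [slice_apply]
    congr
    ext i
    rw [Subsingleton.elim i default]
    rfl

section SliceEigenspace

variable {F : (Fin (n + 1) → Fin q) → ℝ} {μ : ℝ}

lemma adj_slice_of_mem_eigenspace (hF : F ∈ (adj (n + 1) q).eigenspace μ) (a : Fin q) :
    adj n q (slice a F) = (μ + 1) • slice a F - ∑ b, slice b F := by
  ext u
  have h := congrFun (mem_eigenspace_iff.1 hF) (Fin.append u fun _ => a)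
  rw [adj_slice, sum_erase_eq_sub (mem_univ a)] at h
  simp only [Pi.sub_apply, Pi.smul_apply, smul_eq_mul, Finset.sum_apply, slice_apply] at h ⊢
  linarith

lemma sum_slice_mem_eigenspace (hF : F ∈ (adj (n + 1) q).eigenspace μ) :
    ∑ b, slice b F ∈ (adj n q).eigenspace (μ + 1 - q) := by
  rw [mem_eigenspace_iff, map_sum]
  simp only [adj_slice_of_mem_eigenspace hF, sum_sub_distrib, ← smul_sum, sum_const, card_univ,
    Fintype.card_fin, ← Nat.cast_smul_eq_nsmul ℝ, sub_smul]

lemma slice_sub_slice_mem_eigenspace (hF : F ∈ (adj (n + 1) q).eigenspace μ) (a b : Fin q) :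
    slice a F - slice b F ∈ (adj n q).eigenspace (μ + 1) := by
  rw [mem_eigenspace_iff, map_sub, adj_slice_of_mem_eigenspace hF,
    adj_slice_of_mem_eigenspace hF, smul_sub]
  abel

end SliceEigenspace

lemma adj_zero (f : (Fin 0 → Fin q) → ℝ) : adj 0 q f = 0 := by
  ext x
  rw [adj_apply, Pi.zero_apply]
  refine sum_eq_zero fun y hy => ?_
  have hxy := (mem_filter.1 hy).2
  have : hammingDist x y ≤ 0 := hammingDist_le_card_fintype.trans_eq (Fintype.card_fin 0)
  omega

lemma eigenspace_eq_bot {μ : ℝ} (hμ : μ < -n ∨ n * (q - 1) < μ) : (adj n q).eigenspace μ = ⊥ := by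
  induction n generalizing μ with
  | zero =>
    rw [Submodule.eq_bot_iff]
    intro f hf
    rw [mem_eigenspace_iff, adj_zero, eq_comm, smul_eq_zero] at hf
    exact hf.resolve_left (by push_cast at hμ; rcases hμ with h | h <;> linarith)
  | succ n ih =>
    rw [Submodule.eq_bot_iff]
    intro F hF
    have hq : (0 : ℝ) ≤ q := q.cast_nonneg
    push_cast at hμ
    have hμ₁ : μ + 1 < -n ∨ n * (q - 1) < μ + 1 := by
      rcases hμ with h | h <;> [left; right] <;> nlinarith
    have hμ₂ : μ + 1 - q < -n ∨ n * (q - 1) < μ + 1 - q := by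
      rcases hμ with h | h <;> [left; right] <;> nlinarith
    have hdiff (a b : Fin q) : slice a F - slice b F = 0 :=
      (Submodule.eq_bot_iff _).1 (ih hμ₁) _ (slice_sub_slice_mem_eigenspace hF a b)
    have hsum : ∑ b, slice b F = 0 :=
      (Submodule.eq_bot_iff _).1 (ih hμ₂) _ (sum_slice_mem_eigenspace hF)
    refine eq_zero_of_forall_slice_eq_zero fun a => ?_
    have : ∑ b, slice b F = (q : ℝ) • slice a F := by
      rw [sum_congr rfl fun b _ => sub_eq_zero.1 (hdiff b a), sum_const, card_univ,
        Fintype.card_fin, Nat.cast_smul_eq_nsmul]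
    rw [hsum, eq_comm, smul_eq_zero] at this
    exact this.resolve_left (Nat.cast_ne_zero.2 a.pos.ne')

def eigenvalue (n q k : ℕ) : ℝ := n * (q - 1) - q * k

def U (n q k : ℕ) : Submodule ℝ ((Fin n → Fin q) → ℝ) := (adj n q).eigenspace (eigenvalue n q k)

def UIcc (n q i j : ℕ) : Submodule ℝ ((Fin n → Fin q) → ℝ) := ⨆ k ∈ Icc i j, U n q k

lemma eigenvalue_add (m k q i j : ℕ) :
    eigenvalue m q i + eigenvalue k q j = eigenvalue (m + k) q (i + j) := by
  simp only [eigenvalue]; push_cast; ring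

lemma eigenvalue_succ_add_one_sub (n q k : ℕ) :
    eigenvalue (n + 1) q k + 1 - q = eigenvalue n q k := by
  simp only [eigenvalue]; push_cast; ring

lemma eigenvalue_succ_succ_add_one (n q k : ℕ) :
    eigenvalue (n + 1) q (k + 1) + 1 = eigenvalue n q k := by
  simp only [eigenvalue]; push_cast; ring

lemma inU_iff_mem_U {k : ℕ} {f : (Fin n → Fin q) → ℝ} : inU n q k f ↔ f ∈ U n q k := by
  simp only [U, mem_eigenspace_iff, funext_iff, adj_apply, Pi.smul_apply, smul_eq_mul]
  exact forall_congr' fun x => eq_comm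

lemma U_eq_bot [NeZero q] {k : ℕ} (hk : n < k) : U n q k = ⊥ := by
  refine eigenspace_eq_bot (.inl ?_)
  have : (n : ℝ) + 1 ≤ k := by exact_mod_cast hk
  have : (1 : ℝ) ≤ q := by exact_mod_cast NeZero.one_le
  simp only [eigenvalue]
  nlinarith

lemma iSupIndep_U [NeZero q] : iSupIndep (U n q) := by
  refine (eigenspaces_iSupIndep (adj n q)).comp fun k l h => ?_
  have : (q : ℝ) ≠ 0 := by exact_mod_cast NeZero.ne q
  simp only [eigenvalue] at h
  exact_mod_cast mul_left_cancel₀ this (by linarith : (q : ℝ) * k = q * l)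

lemma UIcc_inf_UIcc_le [NeZero q] (i j i' j' : ℕ) :
    UIcc n q i j ⊓ UIcc n q i' j' ≤ UIcc n q (max i i') (min j j') := fun _ hf =>
  (biSup_mono fun k hk => by simp only [mem_inter, mem_Icc] at hk ⊢; omega :
    ⨆ k ∈ Icc i j ∩ Icc i' j', U n q k ≤ _) (iSupIndep_U.mem_biSup_inter hf.1 hf.2)

lemma U_le_UIcc {i j k : ℕ} (hk : k ∈ Icc i j) : U n q k ≤ UIcc n q i j :=
  le_biSup (U n q) hk

lemma UIcc_mono {i j i' j' : ℕ} (hi : i' ≤ i) (hj : j ≤ j') : UIcc n q i j ≤ UIcc n q i' j' :=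
  biSup_mono fun _ hk => Icc_subset_Icc hi hj hk

lemma UIcc_self (k : ℕ) : UIcc n q k k = U n q k := by
  simp [UIcc]

lemma UIcc_eq_bot {i j : ℕ} (h : j < i) : UIcc n q i j = ⊥ := by
  simp [UIcc, Icc_eq_empty_of_lt h]

section SliceUIcc

variable {F : (Fin (n + 1) → Fin q) → ℝ}

lemma sum_slice_mem_U {k : ℕ} (hF : F ∈ U (n + 1) q k) : ∑ b, slice b F ∈ U n q k := by
  simpa [U, eigenvalue_succ_add_one_sub] using sum_slice_mem_eigenspace hF

lemma slice_sub_slice_mem_U {k : ℕ} (hF : F ∈ U (n + 1) q (k + 1)) (a b : Fin q) :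
    slice a F - slice b F ∈ U n q k := by
  simpa [U, eigenvalue_succ_succ_add_one] using slice_sub_slice_mem_eigenspace hF a b

lemma slice_eq_slice (hF : F ∈ U (n + 1) q 0) (a b : Fin q) : slice a F = slice b F := by
  refine sub_eq_zero.1 <| (Submodule.eq_bot_iff _).1 (eigenspace_eq_bot (.inr ?_)) _
    (slice_sub_slice_mem_eigenspace hF a b)
  have : (1 : ℝ) ≤ q := by exact_mod_cast a.pos
  simp only [eigenvalue]
  push_cast
  nlinarith

variable {i j : ℕ}

-- For `k = 0` the difference vanishes (`slice_eq_slice`), so truncating `i - 1` and `j - 1` at `0`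
-- is harmless.
lemma slice_sub_slice_mem_UIcc (hF : F ∈ UIcc (n + 1) q i j) (a b : Fin q) :
    slice a F - slice b F ∈ UIcc n q (i - 1) (j - 1) := by
  have : UIcc (n + 1) q i j ≤ (UIcc n q (i - 1) (j - 1)).comap (slice a - slice b) := by
    refine iSup₂_le fun k hk F hF => ?_
    rw [Submodule.mem_comap, LinearMap.sub_apply]
    rcases k with _ | k
    · rw [slice_eq_slice hF a b, sub_self]
      exact zero_mem _
    · exact U_le_UIcc (by simp at hk ⊢; omega) (slice_sub_slice_mem_U hF a b)
  simpa using this hF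

variable [NeZero q]

lemma sum_slice_mem_UIcc (hF : F ∈ UIcc (n + 1) q i j) :
    ∑ b, slice b F ∈ UIcc n q i (min j n) := by
  have : UIcc (n + 1) q i j ≤ (UIcc n q i (min j n)).comap (∑ b, slice b) := by
    refine iSup₂_le fun k hk F hF => ?_
    rw [Submodule.mem_comap, LinearMap.sum_apply]
    rcases le_or_gt k n with hkn | hkn
    · exact U_le_UIcc (by simp_all) (sum_slice_mem_U hF)
    · rw [(Submodule.eq_bot_iff _).1 (U_eq_bot hkn) _ (sum_slice_mem_U hF)]
      exact zero_mem _
  simpa using this hF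

lemma slice_mem_UIcc (hF : F ∈ UIcc (n + 1) q i j) (hj : j ≤ n + 1) (a : Fin q) :
    slice a F ∈ UIcc n q (i - 1) (min j n) := by
  have hq : (q : ℝ) ≠ 0 := by exact_mod_cast NeZero.ne q
  have h : slice a F = (q : ℝ)⁻¹ • (∑ b, slice b F + ∑ b, (slice a F - slice b F)) := by
    simp [sum_sub_distrib, ← Nat.cast_smul_eq_nsmul ℝ, smul_smul, hq]
  rw [h]
  refine Submodule.smul_mem _ _ (add_mem ?_ (sum_mem fun b _ => ?_))
  · exact UIcc_mono (Nat.sub_le i 1) le_rfl (sum_slice_mem_UIcc hF)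
  · exact UIcc_mono le_rfl (by omega) (slice_sub_slice_mem_UIcc hF a b)

end SliceUIcc

lemma suppCard_append (F : (Fin (m + k) → Fin q) → ℝ) :
    suppCard (m + k) q F = ∑ v, suppCard m q fun u => F (Fin.append u v) := by
  simp only [suppCard, card_filter]
  rw [← (Fin.appendEquiv m k).sum_comp, Fintype.sum_prod_type_right]
  rfl

lemma suppCard_eq_sum_slice (F : (Fin (n + 1) → Fin q) → ℝ) :
    suppCard (n + 1) q F = ∑ a, suppCard n q (slice a F) := by
  rw [suppCard_append]
  refine Fintype.sum_equiv (Equiv.funUnique (Fin 1) (Fin q)) _ _ fun v => ?_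
  rw [show v = fun _ => v 0 from funext (Fin.forall_fin_one.2 rfl)]
  rfl

def tensor (f : (Fin m → Fin q) → ℝ) (g : (Fin k → Fin q) → ℝ) : (Fin (m + k) → Fin q) → ℝ :=
  fun x => f (fun i => x (Fin.castAdd k i)) * g (fun j => x (Fin.natAdd m j))

@[simp]
lemma tensor_append (f : (Fin m → Fin q) → ℝ) (g : (Fin k → Fin q) → ℝ) (u : Fin m → Fin q)
    (v : Fin k → Fin q) : tensor f g (Fin.append u v) = f u * g v := by
  simp [tensor]

lemma tensor_mem_U {i j : ℕ} {f : (Fin m → Fin q) → ℝ} {g : (Fin k → Fin q) → ℝ}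
    (hf : f ∈ U m q i) (hg : g ∈ U k q j) : tensor f g ∈ U (m + k) q (i + j) := by
  rw [U, mem_eigenspace_iff] at hf hg ⊢
  ext x
  rw [← Fin.append_castAdd_natAdd (f := x), adj_append]
  simp only [tensor_append, ← sum_mul, ← mul_sum, ← adj_apply, hf, hg, Pi.smul_apply, smul_eq_mul,
    ← eigenvalue_add]
  ring

lemma suppCard_tensor (f : (Fin m → Fin q) → ℝ) (g : (Fin k → Fin q) → ℝ) :
    suppCard (m + k) q (tensor f g) = suppCard m q f * suppCard k q g := by
  rw [suppCard_append, suppCard, suppCard, card_filter, card_filter, sum_mul_sum, sum_comm]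
  refine sum_congr rfl fun v _ => ?_
  simp only [suppCard, card_filter, tensor_append]
  refine sum_congr rfl fun u _ => ?_
  by_cases f u = 0 <;> by_cases g v = 0 <;> simp [*]

lemma suppCard_eq_zero_iff {f : (Fin n → Fin q) → ℝ} : suppCard n q f = 0 ↔ f = 0 := by
  simp [suppCard, filter_eq_empty_iff, funext_iff]

lemma card_mul_le_suppCard_mul {F : (Fin (n + 1) → Fin q) → ℝ} {B c : ℕ}
    (hB : ∀ a, slice a F ≠ 0 → B ≤ suppCard n q (slice a F) * c) :
    #{a | slice a F ≠ 0} * B ≤ suppCard (n + 1) q F * c := by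
  rw [suppCard_eq_sum_slice, sum_mul, ← smul_eq_mul]
  exact (card_nsmul_le_sum _ _ B fun a ha => hB a (mem_filter.1 ha).2).trans
    (sum_le_sum_of_subset (subset_univ _))

section VanishingSlice

variable {F : (Fin (n + 1) → Fin q) → ℝ} {i j : ℕ} {c : Fin q}

lemma one_le_of_slice_eq_zero (hF : F ∈ UIcc (n + 1) q i j) (hF0 : F ≠ 0)
    (hc : slice c F = 0) : 1 ≤ j := by
  by_contra hj
  have hF' : F ∈ U (n + 1) q 0 := by
    rw [← UIcc_self]
    exact UIcc_mono (Nat.zero_le i) (by omega) hF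
  exact hF0 (eq_zero_of_forall_slice_eq_zero fun a => (slice_eq_slice hF' a c).trans hc)

lemma slice_mem_UIcc_of_slice_eq_zero (hF : F ∈ UIcc (n + 1) q i j) (hc : slice c F = 0)
    (a : Fin q) : slice a F ∈ UIcc n q (i - 1) (j - 1) := by
  simpa [hc] using slice_sub_slice_mem_UIcc hF a c

lemma slice_mem_UIcc_of_sum_slice_eq [NeZero q] (hF : F ∈ UIcc (n + 1) q i j)
    (hc : slice c F = 0) {a : Fin q} (hsum : ∑ b, slice b F = slice a F) :
    slice a F ∈ UIcc n q i (j - 1) :=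
  UIcc_mono (le_max_left _ _) (by omega) <| UIcc_inf_UIcc_le _ _ _ _ <|
    Submodule.mem_inf.2 ⟨hsum ▸ sum_slice_mem_UIcc hF, slice_mem_UIcc_of_slice_eq_zero hF hc a⟩

end VanishingSlice

lemma two_pow_mul_three_pow_le {p r p' r' : ℕ} (hr : r ≤ r') (h : p + r ≤ p' + r') :
    2 ^ p * 3 ^ r ≤ 2 ^ p' * 3 ^ r' :=
  calc 2 ^ p * 3 ^ r ≤ 2 ^ (p' + (r' - r)) * 3 ^ r := by gcongr <;> omega
    _ = 2 ^ p' * (2 ^ (r' - r) * 3 ^ r) := by ring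
    _ ≤ 2 ^ p' * (3 ^ (r' - r) * 3 ^ r) := by gcongr; omega
    _ = 2 ^ p' * 3 ^ r' := by rw [← pow_add, Nat.sub_add_cancel hr]

-- Both sides are multiplied by `2 ^ n` because `2 ^ (i + j - n)` need not be an integer.
theorem two_pow_mul_three_pow_le_suppCard_mul {i j : ℕ} {F : (Fin n → Fin 3) → ℝ} (hjn : j ≤ n)
    (hF : F ∈ UIcc n 3 i j) (hF0 : F ≠ 0) : 2 ^ (i + j) * 3 ^ (n - j) ≤ suppCard n 3 F * 2 ^ n := by
  induction n generalizing i j with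
  | zero =>
    obtain rfl : j = 0 := by omega
    obtain rfl : i = 0 := by
      by_contra hi
      exact hF0 ((Submodule.eq_bot_iff _).1 (UIcc_eq_bot (by omega)) F hF)
    simpa [Nat.one_le_iff_ne_zero, suppCard_eq_zero_iff] using hF0
  | succ n ih =>
    set Z : Finset (Fin 3) := {a | slice a F ≠ 0} with hZ
    have hcard (B : ℕ) (hB : ∀ a, slice a F ≠ 0 → B ≤ suppCard n 3 (slice a F) * 2 ^ n) :
        #Z * B * 2 ≤ suppCard (n + 1) 3 F * 2 ^ (n + 1) := by
      rw [pow_succ, ← mul_assoc]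
      exact Nat.mul_le_mul_right 2 (card_mul_le_suppCard_mul hB)
    by_cases hall : ∀ a, slice a F ≠ 0
    · have h := hcard _ fun a ha => ih (min_le_right j n) (slice_mem_UIcc hF hjn a) ha
      rw [hZ, filter_true_of_mem fun a _ => hall a, card_univ, Fintype.card_fin] at h
      calc 2 ^ (i + j) * 3 ^ (n + 1 - j)
          ≤ 2 ^ ((i - 1) + min j n + 1) * 3 ^ (n - min j n + 1) :=
            two_pow_mul_three_pow_le (by omega) (by omega)
        _ = 3 * (2 ^ ((i - 1) + min j n) * 3 ^ (n - min j n)) * 2 := by ring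
        _ ≤ _ := h
    obtain ⟨c, hc⟩ := not_forall_not.1 hall
    have hj := one_le_of_slice_eq_zero hF hF0 hc
    by_cases hZ2 : 2 ≤ #Z
    · have h := hcard _ fun a ha => ih (by omega) (slice_mem_UIcc_of_slice_eq_zero hF hc a) ha
      calc 2 ^ (i + j) * 3 ^ (n + 1 - j)
          ≤ 2 ^ ((i - 1) + (j - 1) + 2) * 3 ^ (n - (j - 1)) :=
            two_pow_mul_three_pow_le (by omega) (by omega)
        _ = 2 * (2 ^ ((i - 1) + (j - 1)) * 3 ^ (n - (j - 1))) * 2 := by ring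
        _ ≤ #Z * (2 ^ ((i - 1) + (j - 1)) * 3 ^ (n - (j - 1))) * 2 := by gcongr
        _ ≤ _ := h
    obtain ⟨a, haZ⟩ : ∃ a, Z = {a} := by
      refine card_eq_one.1 (le_antisymm (by omega) (card_pos.2 ?_))
      by_contra hZ0
      have hslice0 : ∀ b, slice b F = 0 := by
        simpa [hZ, not_nonempty_iff_eq_empty, filter_eq_empty_iff] using hZ0
      exact hF0 (eq_zero_of_forall_slice_eq_zero hslice0)
    have hmem (b : Fin 3) : slice b F ≠ 0 ↔ b = a := by
      rw [← mem_singleton, ← haZ, hZ, mem_filter, and_iff_right (mem_univ b)]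
    have hsum : ∑ b, slice b F = slice a F :=
      Fintype.sum_eq_single a fun b hb => not_not.1 fun h => hb ((hmem b).1 h)
    have h := hcard _ fun b hb => by
      obtain rfl := (hmem b).1 hb
      exact ih (by omega) (slice_mem_UIcc_of_sum_slice_eq hF hc hsum) hb
    rw [haZ, card_singleton, one_mul] at h
    calc 2 ^ (i + j) * 3 ^ (n + 1 - j)
        ≤ 2 ^ (i + (j - 1) + 1) * 3 ^ (n - (j - 1)) :=
          two_pow_mul_three_pow_le (by omega) (by omega)
      _ = 2 ^ (i + (j - 1)) * 3 ^ (n - (j - 1)) * 2 := by ring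
      _ ≤ _ := h

-- Integer-valued eigenvectors, whose eigenvalue equation `decide` can check.
lemma intCast_mem_U {k : ℕ} {W : (Fin n → Fin q) → ℤ} {L : ℤ} (hL : (L : ℝ) = eigenvalue n q k)
    (hW : ∀ x, L * W x = ∑ y with hammingDist x y = 1, W y) : (fun x => (W x : ℝ)) ∈ U n q k := by
  rw [U, mem_eigenspace_iff]
  ext x
  simp only [adj_apply, Pi.smul_apply, smul_eq_mul, ← hL]
  exact_mod_cast (hW x).symm

lemma suppCard_intCast (W : (Fin n → Fin q) → ℤ) :
    suppCard n q (fun x => (W x : ℝ)) = #{x | W x ≠ 0} := by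
  simp [suppCard]

def phi : (Fin 1 → Fin 3) → ℤ := fun x => ![1, -1, 0] (x 0)

def psi : (Fin 3 → Fin 3) → ℤ := fun x =>
  ![![![-1, 0, 0], ![0, 1, 0], ![0, 0, 0]],
    ![![0, 0, 1], ![0, 0, 0], ![0, -1, 0]],
    ![![0, 0, 0], ![0, 0, -1], ![1, 0, 0]]] (x 0) (x 1) (x 2)

lemma phi_mem_U : (fun x => (phi x : ℝ)) ∈ U 1 3 1 :=
  intCast_mem_U (L := -1) (by norm_num [eigenvalue]) (by decide)

lemma suppCard_phi : suppCard 1 3 (fun x => (phi x : ℝ)) = 2 := by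
  rw [suppCard_intCast]
  decide

set_option maxRecDepth 10000 in
lemma psi_mem_U : (fun x => (psi x : ℝ)) ∈ U 3 3 2 :=
  intCast_mem_U (L := 0) (by norm_num [eigenvalue]) (by decide)

set_option maxRecDepth 10000 in
lemma suppCard_psi : suppCard 3 3 (fun x => (psi x : ℝ)) = 6 := by
  rw [suppCard_intCast]
  decide

lemma exists_mem_U_suppCard_eq_two_pow (a : ℕ) : ∃ f ∈ U a 3 a, suppCard a 3 f = 2 ^ a := by
  induction a with
  | zero =>
    refine ⟨fun _ => 1, ?_, by simp [suppCard]⟩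
    rw [U, mem_eigenspace_iff, adj_zero]
    simp [eigenvalue]
  | succ a ih =>
    obtain ⟨f, hf, hsupp⟩ := ih
    exact ⟨tensor f _, tensor_mem_U hf phi_mem_U,
      by rw [suppCard_tensor, hsupp, suppCard_phi, pow_succ]⟩

lemma exists_mem_U_suppCard_eq (a b : ℕ) :
    ∃ f ∈ U (a + 3 * b) 3 (a + 2 * b), suppCard (a + 3 * b) 3 f = 2 ^ a * 6 ^ b := by
  induction b with
  | zero => simpa using exists_mem_U_suppCard_eq_two_pow a
  | succ b ih =>
    obtain ⟨f, hf, hsupp⟩ := ih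
    rw [show a + 3 * (b + 1) = a + 3 * b + 3 by ring, show a + 2 * (b + 1) = a + 2 * b + 2 by ring]
    exact ⟨tensor f _, tensor_mem_U hf psi_mem_U,
      by rw [suppCard_tensor, hsupp, suppCard_psi, pow_succ, mul_assoc]⟩

end HammingGraph

open HammingGraph

theorem stmt9_general (n i : ℕ) (hi1 : 2 * n < 3 * i) (hi2 : i ≤ n) :
    (∀ f : (Fin n → Fin 3) → ℝ, inU n 3 i f → f ≠ 0 →
      2 ^ (2 * i - n) * 3 ^ (n - i) ≤ suppCard n 3 f) ∧
    (∃ f : (Fin n → Fin 3) → ℝ, inU n 3 i f ∧ f ≠ 0 ∧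
      suppCard n 3 f = 2 ^ (2 * i - n) * 3 ^ (n - i)) := by
  refine ⟨fun f hf hf0 => ?_, ?_⟩
  · have h := two_pow_mul_three_pow_le_suppCard_mul hi2 (by rwa [UIcc_self, ← inU_iff_mem_U]) hf0
    rw [show i + i = 2 * i - n + n by omega, pow_add, mul_right_comm] at h
    exact Nat.le_of_mul_le_mul_right h (by positivity)
  · obtain ⟨a, b, rfl, rfl⟩ : ∃ a b, n = a + 3 * b ∧ i = a + 2 * b :=
      ⟨3 * i - 2 * n, n - i, by omega, by omega⟩
    obtain ⟨f, hf, hsupp⟩ := exists_mem_U_suppCard_eq a b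
    refine ⟨f, inU_iff_mem_U.2 hf, fun h => ?_, ?_⟩
    · rw [suppCard_eq_zero_iff.2 h] at hsupp
      exact absurd hsupp.symm (by positivity)
    · rw [hsupp, show 2 * (a + 2 * b) - (a + 3 * b) = a + b by omega,
        show a + 3 * b - (a + 2 * b) = b by omega, pow_add, mul_assoc, ← mul_pow]
      rfl

/-- For `2n/3 < i ≤ n`, every nonzero `f ∈ U_i(n,3)` has
`|Supp(f)| ≥ 2^{2i-n} · 3^{n-i}`, and the bound is sharp. -/
theorem stmt9 (n i : ℕ) (hn : 1 ≤ n) (hi1 : 2 * n < 3 * i) (hi2 : i ≤ n) :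
    (∀ f : (Fin n → Fin 3) → ℝ, inU n 3 i f → f ≠ 0 →
      2 ^ (2 * i - n) * 3 ^ (n - i) ≤ suppCard n 3 f) ∧
    (∃ f : (Fin n → Fin 3) → ℝ, inU n 3 i f ∧ f ≠ 0 ∧
      suppCard n 3 f = 2 ^ (2 * i - n) * 3 ^ (n - i)) :=
  stmt9_general n i hi1 hi2
end

section
/- Let G be a graph and let (T_0, T_1) be a 1-perfect bitrade in G. Then the function f_{(T_0,T_1)}, which equals 1 on T_0, −1 on T_1, and 0 elsewhere, is a (−1)-eigenfunction of G; that is, f_{(T_0,T_1)} ≢ 0 and −f_{(T_0,T_1)}(x) = Σ_{y ∈ N(x)} f_{(T_0,T_1)}(y) for every vertex x of G, where N(x) is the set of neighbors of x. -/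
/-- `(T0, T1)` is a 1-perfect bitrade in the graph `G`: `T0` and `T1` are disjoint nonempty
vertex sets such that for every vertex `x`, the closed ball `B(x) = N(x) ∪ {x}` either
contains exactly one element of `T0` and exactly one element of `T1`, or contains
no element of `T0 ∪ T1`. -/
def IsPerfectBitrade {V : Type*} (G : SimpleGraph V) (T0 T1 : Set V) : Prop :=
  T0.Nonempty ∧ T1.Nonempty ∧ Disjoint T0 T1 ∧
  ∀ x : V,
    ((∃! y, (y ∈ G.neighborSet x ∪ {x}) ∧ y ∈ T0) ∧
     (∃! y, (y ∈ G.neighborSet x ∪ {x}) ∧ y ∈ T1)) ∨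
    (∀ y ∈ G.neighborSet x ∪ {x}, y ∉ T0 ∪ T1)

/-- If `(T0,T1)` is a 1-perfect bitrade in `G`, then the function equal to `1` on `T0`,
`-1` on `T1` and `0` elsewhere is a `(-1)`-eigenfunction of `G`. -/
theorem stmt10 {V : Type*} [Fintype V] [DecidableEq V] (G : SimpleGraph V) [DecidableRel G.Adj]
    (T0 T1 : Finset V) (h : IsPerfectBitrade G ↑T0 ↑T1) :
    (fun x => if x ∈ T0 then (1 : ℝ) else if x ∈ T1 then -1 else 0) ≠ 0 ∧
    ∀ x : V,
      -(if x ∈ T0 then (1 : ℝ) else if x ∈ T1 then -1 else 0) =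
        ∑ y ∈ G.neighborFinset x, (if y ∈ T0 then (1 : ℝ) else if y ∈ T1 then -1 else 0) := by
  classical
  obtain ⟨⟨a, ha⟩, -, hdisj, hmain⟩ := h
  have ha' : a ∈ T0 := ha
  have hdis : ∀ y, y ∈ T0 → y ∉ T1 := by
    intro y hy hy'
    exact Set.disjoint_left.mp hdisj (Finset.mem_coe.mpr hy) (Finset.mem_coe.mpr hy')
  constructor
  · intro hf
    have := congrFun hf a
    simp [ha'] at this
  · intro x
    have hsum : ∑ y ∈ G.neighborFinset x, (if y ∈ T0 then (1 : ℝ) else if y ∈ T1 then -1 else 0)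
        = (((G.neighborFinset x).filter (· ∈ T0)).card : ℝ)
          - (((G.neighborFinset x).filter (· ∈ T1)).card : ℝ) := by
      have hkey : ∀ y ∈ G.neighborFinset x,
          (if y ∈ T0 then (1 : ℝ) else if y ∈ T1 then -1 else 0)
          = (if y ∈ T0 then (1:ℝ) else 0) + (if y ∈ T1 then (-1:ℝ) else 0) := by
        intro y _
        by_cases h0 : y ∈ T0
        · simp [h0, hdis y h0]
        · simp [h0]
      rw [Finset.sum_congr rfl hkey, Finset.sum_add_distrib,
        ← Finset.sum_filter, ← Finset.sum_filter, Finset.sum_const, Finset.sum_const]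
      simp [sub_eq_add_neg]
    have hxball : x ∈ G.neighborSet x ∪ {x} := Or.inr rfl
    have hballmem : ∀ z, z ∈ G.neighborFinset x → z ∈ G.neighborSet x ∪ {x} := by
      intro z hz
      exact Or.inl (by simpa using hz)
    rcases hmain x with ⟨⟨y0, ⟨hy0b, hy0T⟩, hu0⟩, ⟨y1, ⟨hy1b, hy1T⟩, hu1⟩⟩ | hnone
    · have hy0T' : y0 ∈ T0 := hy0T
      have hy1T' : y1 ∈ T1 := hy1T
      by_cases hx0 : x ∈ T0
      · have hy0x : y0 = x := (hu0 x ⟨hxball, hx0⟩).symm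
        have hx1 : x ∉ T1 := hdis x hx0
        have hf0 : (G.neighborFinset x).filter (· ∈ T0) = ∅ := by
          rw [Finset.filter_eq_empty_iff]
          intro z hz hzT
          have hzx : z = x := by rw [hu0 z ⟨hballmem z hz, hzT⟩, hy0x]
          exact (G.ne_of_adj (by simpa using hz)) hzx.symm
        have hy1x : y1 ≠ x := fun he => hx1 (he ▸ hy1T')
        have hy1adj : G.Adj x y1 := by
          rcases hy1b with h1 | h1
          · simpa using h1
          · exact absurd h1 hy1x
        have hf1 : (G.neighborFinset x).filter (· ∈ T1) = {y1} := by
          apply Finset.eq_singleton_iff_unique_mem.mpr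
          constructor
          · simp [SimpleGraph.mem_neighborFinset, hy1adj, hy1T']
          · intro z hz
            rw [Finset.mem_filter] at hz
            exact hu1 z ⟨hballmem z hz.1, hz.2⟩
        rw [hsum, hf0, hf1]
        simp [hx0]
      · by_cases hx1 : x ∈ T1
        · have hy1x : y1 = x := (hu1 x ⟨hxball, hx1⟩).symm
          have hf1 : (G.neighborFinset x).filter (· ∈ T1) = ∅ := by
            rw [Finset.filter_eq_empty_iff]
            intro z hz hzT
            have hzx : z = x := by rw [hu1 z ⟨hballmem z hz, hzT⟩, hy1x]
            exact (G.ne_of_adj (by simpa using hz)) hzx.symm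
          have hy0x : y0 ≠ x := fun he => hx0 (he ▸ hy0T')
          have hy0adj : G.Adj x y0 := by
            rcases hy0b with h1 | h1
            · simpa using h1
            · exact absurd h1 hy0x
          have hf0 : (G.neighborFinset x).filter (· ∈ T0) = {y0} := by
            apply Finset.eq_singleton_iff_unique_mem.mpr
            constructor
            · simp [SimpleGraph.mem_neighborFinset, hy0adj, hy0T']
            · intro z hz
              rw [Finset.mem_filter] at hz
              exact hu0 z ⟨hballmem z hz.1, hz.2⟩
          rw [hsum, hf0, hf1]
          simp [hx0, hx1]
        · have hy0x : y0 ≠ x := fun he => hx0 (he ▸ hy0T')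
          have hy1x : y1 ≠ x := fun he => hx1 (he ▸ hy1T')
          have hy0adj : G.Adj x y0 := by
            rcases hy0b with h1 | h1
            · simpa using h1
            · exact absurd h1 hy0x
          have hy1adj : G.Adj x y1 := by
            rcases hy1b with h1 | h1
            · simpa using h1
            · exact absurd h1 hy1x
          have hf0 : (G.neighborFinset x).filter (· ∈ T0) = {y0} := by
            apply Finset.eq_singleton_iff_unique_mem.mpr
            refine ⟨by simp [SimpleGraph.mem_neighborFinset, hy0adj, hy0T'], ?_⟩
            intro z hz
            rw [Finset.mem_filter] at hz
            exact hu0 z ⟨hballmem z hz.1, hz.2⟩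
          have hf1 : (G.neighborFinset x).filter (· ∈ T1) = {y1} := by
            apply Finset.eq_singleton_iff_unique_mem.mpr
            refine ⟨by simp [SimpleGraph.mem_neighborFinset, hy1adj, hy1T'], ?_⟩
            intro z hz
            rw [Finset.mem_filter] at hz
            exact hu1 z ⟨hballmem z hz.1, hz.2⟩
          rw [hsum, hf0, hf1]
          simp [hx0, hx1]
    · have hx0 : x ∉ T0 := fun hc => hnone x hxball (Set.mem_union_left _ hc)
      have hx1 : x ∉ T1 := fun hc => hnone x hxball (Set.mem_union_right _ hc)
      have hf0 : (G.neighborFinset x).filter (· ∈ T0) = ∅ := by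
        rw [Finset.filter_eq_empty_iff]
        intro z hz hzT
        exact hnone z (hballmem z hz) (Set.mem_union_left _ hzT)
      have hf1 : (G.neighborFinset x).filter (· ∈ T1) = ∅ := by
        rw [Finset.filter_eq_empty_iff]
        intro z hz hzT
        exact hnone z (hballmem z hz) (Set.mem_union_right _ hzT)
      rw [hsum, hf0, hf1]
      simp [hx0, hx1]
end
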